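/- arXiv:2207.14383 — 4 statements merged into one kernel-verified Lean document; each statement's English description precedes it below -/
import Mathlib

section
/- Let l ≥ 1 and let Φ : ℂ → ℂ^{l×l} be a matrix-valued function analytic on the open unit disk 𝔻 = {z : |z| < 1}, such that det Φ(0) = 0 and det Φ(z) ≠ 0 for every z ∈ 𝔻∖{0}. Then the following are equivalent: (1) Φ has a simple zero at z = 0, i.e., the function z ↦ z·Φ(z)^{−1}, defined on 𝔻∖{0}, has a finite limit as z → 0 (this limit is then automatically a nonzero matrix, so Φ^{−1} has a pole of order exactly one at 0); (2) for all vectors a, b ∈ ℂ^l, the relations Φ(0)·a = 0 and Φ(0)·b + Φ′(0)·a = 0 imply a = 0, where Φ′ denotes the complex derivative of Φ. -/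
open Metric Filter Topology Matrix

/-!
If `z Φ(z)⁻¹ → L` and `Φ(0) a = 0`, `Φ(0) b + Φ'(0) a = 0`, then `v(z) = a + z b` satisfies
`Φ(z) v(z) = o(z)`, so `v(z) = (z Φ(z)⁻¹) (Φ(z) v(z) / z) → L 0 = 0`, while `v(z) → a`.

Conversely, write `det Φ = zᵏ h` with `h(0) ≠ 0`; the columns of `h⁻¹ adj Φ` are analytic vectors
`c` with `Φ c = zᵏ eⱼ`. If `Φ c = z^(k+2) e`, then `(c(0), c'(0))` satisfies the two relations, so
`c(0) = 0` and `c = z c̃` with `Φ c̃ = z^(k+1) e`. Descending to the exponent one gives an analytic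
`C` with `Φ C = z`, hence `z Φ⁻¹ = C` near `0`, which converges.
-/

section

variable {𝕜 : Type*} [NontriviallyNormedField 𝕜] {m n : Type*} [Fintype n]

noncomputable def entrywiseDeriv (Φ : 𝕜 → Matrix m n 𝕜) (x : 𝕜) : Matrix m n 𝕜 :=
  Matrix.of fun i j => deriv (fun z => Φ z i j) x

theorem analyticAt_det [DecidableEq n] {Φ : 𝕜 → Matrix n n 𝕜} {x : 𝕜}
    (hΦ : ∀ i j, AnalyticAt 𝕜 (fun z => Φ z i j) x) :
    AnalyticAt 𝕜 (fun z => (Φ z).det) x := by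
  simp only [det_apply']
  exact Finset.analyticAt_fun_sum _ fun σ _ =>
    analyticAt_const.mul (Finset.analyticAt_fun_prod _ fun i _ => hΦ (σ i) i)

theorem analyticAt_adjugate_apply [DecidableEq n] {Φ : 𝕜 → Matrix n n 𝕜} {x : 𝕜}
    (hΦ : ∀ i j, AnalyticAt 𝕜 (fun z => Φ z i j) x) (i j : n) :
    AnalyticAt 𝕜 (fun z => (Φ z).adjugate i j) x := by
  simp only [adjugate_apply]
  refine analyticAt_det fun k k' => ?_
  by_cases hk : k = j
  · simpa [updateRow_apply, hk] using analyticAt_const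
  · simpa [updateRow_apply, hk] using hΦ k k'

theorem analyticAt_mulVec [Fintype m] {Φ : 𝕜 → Matrix m n 𝕜} {v : 𝕜 → n → 𝕜} {x : 𝕜}
    (hΦ : ∀ i j, AnalyticAt 𝕜 (fun z => Φ z i j) x) (hv : AnalyticAt 𝕜 v x) :
    AnalyticAt 𝕜 (fun z => Φ z *ᵥ v z) x := by
  rw [analyticAt_pi_iff] at hv ⊢
  exact fun i => Finset.analyticAt_fun_sum _ fun k _ => (hΦ i k).mul (hv k)

theorem hasDerivAt_mulVec {Φ : 𝕜 → Matrix m n 𝕜} {v : 𝕜 → n → 𝕜} {v' : n → 𝕜} {x : 𝕜}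
    (hΦ : ∀ i j, DifferentiableAt 𝕜 (fun z => Φ z i j) x) (hv : HasDerivAt v v' x) :
    HasDerivAt (fun z => Φ z *ᵥ v z) (Φ x *ᵥ v' + entrywiseDeriv Φ x *ᵥ v x) x := by
  rw [hasDerivAt_pi] at hv ⊢
  intro i
  simp only [mulVec, dotProduct, Pi.add_apply, entrywiseDeriv, of_apply,
    ← Finset.sum_add_distrib]
  exact HasDerivAt.fun_sum fun k _ => by
    simpa only [add_comm, mul_comm] using (hΦ i k).hasDerivAt.fun_mul (hv k)

theorem eq_zero_of_tendsto_smul_inv [DecidableEq n] {Φ : 𝕜 → Matrix n n 𝕜} {L : Matrix n n 𝕜}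
    {a b : n → 𝕜} (hΦ : ∀ i j, DifferentiableAt 𝕜 (fun z => Φ z i j) 0)
    (hdet : ∀ᶠ z in 𝓝[≠] 0, (Φ z).det ≠ 0)
    (hL : Tendsto (fun z => z • (Φ z)⁻¹) (𝓝[≠] 0) (𝓝 L))
    (ha : Φ 0 *ᵥ a = 0) (hab : Φ 0 *ᵥ b + entrywiseDeriv Φ 0 *ᵥ a = 0) : a = 0 := by
  set v : 𝕜 → n → 𝕜 := fun z => a + z • b
  have hv : HasDerivAt v b 0 := by
    simpa [v] using ((hasDerivAt_id (0 : 𝕜)).smul_const b).const_add a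
  have hslope : Tendsto (fun z => z⁻¹ • (Φ z *ᵥ v z)) (𝓝[≠] 0) (𝓝 0) := by
    have hd := hasDerivAt_mulVec hΦ hv
    simp only [v, zero_smul, add_zero, hab] at hd
    refine (hasDerivAt_iff_tendsto_slope.mp hd).congr fun z => ?_
    simp [slope_def_module, v, ha]
  have hinv : ∀ᶠ z in 𝓝[≠] 0, v z = (z • (Φ z)⁻¹) *ᵥ (z⁻¹ • (Φ z *ᵥ v z)) := by
    filter_upwards [hdet, self_mem_nhdsWithin] with z hz hz0
    rw [smul_mulVec, mulVec_smul, smul_smul, mul_inv_cancel₀ hz0, one_smul, mulVec_mulVec,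
      nonsing_inv_mul _ (isUnit_iff_ne_zero.mpr hz), one_mulVec]
  have hv_to_zero : Tendsto v (𝓝[≠] 0) (𝓝 (L *ᵥ 0)) :=
    (((continuous_fst.matrix_mulVec continuous_snd).tendsto (L, 0)).comp
      (hL.prodMk_nhds hslope)).congr' (hinv.mono fun z hz => hz.symm)
  have hv_to_a : Tendsto v (𝓝[≠] 0) (𝓝 a) := by
    simpa [v] using hv.continuousAt.tendsto.mono_left nhdsWithin_le_nhds
  simpa using tendsto_nhds_unique hv_to_a hv_to_zero

theorem eq_zero_of_mulVec_eq_pow_smul [Fintype m] {Φ : 𝕜 → Matrix m n 𝕜} {c : 𝕜 → n → 𝕜} {e : m → 𝕜}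
    {k : ℕ} (hchain : ∀ a b, Φ 0 *ᵥ a = 0 → Φ 0 *ᵥ b + entrywiseDeriv Φ 0 *ᵥ a = 0 → a = 0)
    (hΦ : ∀ i j, DifferentiableAt 𝕜 (fun z => Φ z i j) 0) (hc : DifferentiableAt 𝕜 c 0)
    (h : ∀ᶠ z in 𝓝 0, Φ z *ᵥ c z = z ^ (k + 2) • e) : c 0 = 0 := by
  have hpow : HasDerivAt (fun z : 𝕜 => z ^ (k + 2) • e) 0 0 := by
    simpa using (hasDerivAt_pow (k + 2) (0 : 𝕜)).smul_const e
  refine hchain (c 0) (deriv c 0) ?_ ?_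
  · simpa using h.self_of_nhds
  · exact (hasDerivAt_mulVec hΦ hc.hasDerivAt).unique (hpow.congr_of_eventuallyEq h)

theorem exists_mulVec_eq_smul_of_mulVec_eq_pow_smul [Fintype m] {Φ : 𝕜 → Matrix m n 𝕜}
    {e : m → 𝕜} (hchain : ∀ a b, Φ 0 *ᵥ a = 0 → Φ 0 *ᵥ b + entrywiseDeriv Φ 0 *ᵥ a = 0 → a = 0)
    (hΦ : ∀ i j, AnalyticAt 𝕜 (fun z => Φ z i j) 0) (k : ℕ) {c : 𝕜 → n → 𝕜}
    (hc : AnalyticAt 𝕜 c 0) (h : ∀ᶠ z in 𝓝 0, Φ z *ᵥ c z = z ^ (k + 1) • e) :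
    ∃ c' : 𝕜 → n → 𝕜, AnalyticAt 𝕜 c' 0 ∧ ∀ᶠ z in 𝓝 0, Φ z *ᵥ c' z = z • e := by
  induction k generalizing c with
  | zero => exact ⟨c, hc, by simpa using h⟩
  | succ k ih =>
    have hc0 : c 0 = 0 :=
      eq_zero_of_mulVec_eq_pow_smul hchain (fun i j => (hΦ i j).differentiableAt)
        hc.differentiableAt h
    obtain ⟨p, hp⟩ := hc
    have hc' : AnalyticAt 𝕜 (dslope c 0) 0 := ⟨_, hp.has_fpower_series_dslope_fslope⟩
    have hcont : ContinuousAt (fun z => Φ z *ᵥ dslope c 0 z) 0 :=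
      (analyticAt_mulVec hΦ hc').continuousAt
    refine ih hc' ((hcont.eventuallyEq_nhds_iff_eventuallyEq_nhdsNE
      (g := fun z => z ^ (k + 1) • e) (by fun_prop)).1 ?_)
    filter_upwards [h.filter_mono nhdsWithin_le_nhds, self_mem_nhdsWithin] with z hz hz0
    have hcz : c z = z • dslope c 0 z := by simpa [hc0] using (sub_smul_dslope c 0 z).symm
    rw [hcz, mulVec_smul, pow_succ', mul_smul] at hz
    exact smul_right_injective _ hz0 hz

theorem exists_mulVec_eq_pow_smul_single [DecidableEq n] {Φ : 𝕜 → Matrix n n 𝕜}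
    (hΦ : ∀ i j, AnalyticAt 𝕜 (fun z => Φ z i j) 0) (hdet : ∃ᶠ z in 𝓝 0, (Φ z).det ≠ 0) :
    ∃ k : ℕ, ∀ j, ∃ c : 𝕜 → n → 𝕜,
      AnalyticAt 𝕜 c 0 ∧ ∀ᶠ z in 𝓝 0, Φ z *ᵥ c z = z ^ k • Pi.single j 1 := by
  obtain ⟨k, h, hh, hh0, hdet_eq⟩ :=
    (analyticAt_det hΦ).exists_eventuallyEq_pow_smul_nonzero_iff.mpr (not_eventually.mpr hdet)
  refine ⟨k, fun j => ⟨fun z => (h z)⁻¹ • ((Φ z).adjugate *ᵥ Pi.single j 1), ?_, ?_⟩⟩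
  · exact (hh.inv hh0).smul (analyticAt_mulVec (analyticAt_adjugate_apply hΦ) analyticAt_const)
  · filter_upwards [hdet_eq, hh.continuousAt.eventually_ne hh0] with z hz hz0
    rw [mulVec_smul, mulVec_mulVec, mul_adjugate, hz, smul_mulVec, one_mulVec, smul_smul,
      sub_zero, smul_eq_mul, mul_left_comm, inv_mul_cancel₀ hz0, mul_one]

theorem exists_tendsto_smul_inv_of_mulVec_eq_smul_single [DecidableEq n] {Φ : 𝕜 → Matrix n n 𝕜}
    (hdet : ∀ᶠ z in 𝓝[≠] 0, (Φ z).det ≠ 0)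
    (hcols : ∀ j, ∃ c : 𝕜 → n → 𝕜,
      ContinuousAt c 0 ∧ ∀ᶠ z in 𝓝 0, Φ z *ᵥ c z = z • Pi.single j 1) :
    ∃ L, Tendsto (fun z => z • (Φ z)⁻¹) (𝓝[≠] 0) (𝓝 L) := by
  choose c hc hΦc using hcols
  let C : 𝕜 → Matrix n n 𝕜 := fun z => Matrix.of fun i j => c j z i
  have hC : ContinuousAt C 0 := continuousAt_pi.2 fun i => continuousAt_pi.2 fun j =>
    (continuous_apply i).continuousAt.comp (hc j)
  refine ⟨C 0, (hC.tendsto.mono_left nhdsWithin_le_nhds).congr' ?_⟩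
  filter_upwards [hdet, (eventually_all.2 hΦc).filter_mono nhdsWithin_le_nhds] with z hz hzc
  have hmul : Φ z * C z = z • 1 := by
    ext i j
    simpa [C, mul_apply, mulVec, dotProduct, one_apply, Pi.single_apply, eq_comm]
      using congrFun (hzc j) i
  rw [← nonsing_inv_mul_cancel_left (A := Φ z) (C z) (isUnit_iff_ne_zero.mpr hz), hmul,
    mul_smul_comm, mul_one]

end

theorem newton_jost_simple_zero_general
    (l : ℕ) (Φ : ℂ → Matrix (Fin l) (Fin l) ℂ)
    (hA : ∀ i j : Fin l, AnalyticOnNhd ℂ (fun z => Φ z i j) (Metric.ball (0 : ℂ) 1))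
    (hz : ∀ z ∈ Metric.ball (0 : ℂ) 1, z ≠ 0 → (Φ z).det ≠ 0) :
    ((∃ L : Matrix (Fin l) (Fin l) ℂ,
        Filter.Tendsto (fun z => z • (Φ z)⁻¹) (nhdsWithin 0 {(0 : ℂ)}ᶜ) (nhds L))
      ↔ (∀ a b : Fin l → ℂ,
          Φ 0 *ᵥ a = 0 →
          (Φ 0 *ᵥ b) + ((Matrix.of fun i j => deriv (fun z => Φ z i j) 0) *ᵥ a) = 0 →
          a = 0)) := by
  have hΦ : ∀ i j : Fin l, AnalyticAt ℂ (fun z => Φ z i j) 0 :=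
    fun i j => hA i j 0 (mem_ball_self one_pos)
  have hdet : ∀ᶠ z in 𝓝[≠] (0 : ℂ), (Φ z).det ≠ 0 := by
    filter_upwards [nhdsWithin_le_nhds (ball_mem_nhds (0 : ℂ) one_pos), self_mem_nhdsWithin]
      with z hz1 hz0 using hz z hz1 hz0
  constructor
  · rintro ⟨L, hL⟩ a b ha hab
    exact eq_zero_of_tendsto_smul_inv (fun i j => (hΦ i j).differentiableAt) hdet hL ha hab
  · intro hchain
    obtain ⟨k, hcols⟩ :=
      exists_mulVec_eq_pow_smul_single hΦ (hdet.frequently.filter_mono nhdsWithin_le_nhds)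
    refine exists_tendsto_smul_inv_of_mulVec_eq_smul_single hdet fun j => ?_
    obtain ⟨c, hc, hΦc⟩ := hcols j
    -- `z • c` raises the exponent to `k + 1 ≥ 1`, where the descent applies.
    obtain ⟨c', hc', hΦc'⟩ := exists_mulVec_eq_smul_of_mulVec_eq_pow_smul hchain hΦ k
      (analyticAt_id.fun_smul hc) (hΦc.mono fun z hz => by
        rw [mulVec_smul, hz, smul_smul, pow_succ']; rfl)
    exact ⟨c', hc'.continuousAt, hΦc'⟩

/-- Newton–Jost lemma: a matrix-valued function `Φ`, analytic on the unit disk with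
`det Φ(0) = 0` and `det Φ(z) ≠ 0` for `z ∈ 𝔻∖{0}`, has a simple zero at `0` (i.e. `z·Φ(z)⁻¹`
has a finite limit at `0`) if and only if the relations `Φ(0)a = 0`, `Φ(0)b + Φ′(0)a = 0`
imply `a = 0`. -/
theorem newton_jost_simple_zero
    (l : ℕ) (hl : 1 ≤ l) (Φ : ℂ → Matrix (Fin l) (Fin l) ℂ)
    (hA : ∀ i j : Fin l, AnalyticOnNhd ℂ (fun z => Φ z i j) (Metric.ball (0 : ℂ) 1))
    (h0 : (Φ 0).det = 0)
    (hz : ∀ z ∈ Metric.ball (0 : ℂ) 1, z ≠ 0 → (Φ z).det ≠ 0) :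
    ((∃ L : Matrix (Fin l) (Fin l) ℂ,
        Filter.Tendsto (fun z => z • (Φ z)⁻¹) (nhdsWithin 0 {(0 : ℂ)}ᶜ) (nhds L))
      ↔ (∀ a b : Fin l → ℂ,
          Φ 0 *ᵥ a = 0 →
          (Φ 0 *ᵥ b) + ((Matrix.of fun i j => deriv (fun z => Φ z i j) 0) *ᵥ a) = 0 →
          a = 0)) :=
  newton_jost_simple_zero_general l Φ hA hz
end

section
/- Fix l ≥ 1 and n ≥ 1. Let (S_j)_{j∈ℕ} be real symmetric l×l matrices such that for every N ∈ ℕ the block Hankel matrix [S_{i+j}]_{0≤i,j≤N} is positive definite, and let P_n, P_{n−1}, A_n and Ψ̂_n be the associated orthonormal matrix polynomials, recurrence coefficient and matrix polynomial Ψ̂_n(z). Then: (1) det Ψ̂_n(z) ≠ 0 for every z ∈ ℂ with |z| ≤ 1 and z ∉ [−1,0)∪(0,1]; (2) Ψ̂_n has at most simple zeros on [−1,0)∪(0,1]: for every z₀ ∈ [−1,0)∪(0,1] and all vectors a, b ∈ ℂ^l, if Ψ̂_n(z₀)·a = 0 and Ψ̂_n(z₀)·b + Ψ̂_n′(z₀)·a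 = 0 then a = 0 (Ψ̂_n′ being the derivative of the matrix polynomial Ψ̂_n). -/
/-!
Write `x = (z + z⁻¹) / 2` and `v_k = P_k(x) a`. If `Ψ̂_n(z) a = 0` with `z ≠ 0`, then
`v_n = 2z c` with `c = A_nᵀ v_{n-1}`, and `c = 0` forces `a = 0`: the three-term recurrence
`x P_k = A_{k+1} P_{k+1} + B_k P_k + A_kᵀ P_{k-1}` runs downwards because every `A_k` and
`P_0` are invertible. Pairing the Christoffel–Darboux identity with the conjugate sequence
`v̄_k` gives `2 (z - z̄) |c|² = (x - x̄) Σ_{k<n} |v_k|²`, and `x - x̄ = (z - z̄)(1 - |z|⁻²)/2`,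
so `c = 0` when `z ∉ ℝ`, `|z| ≤ 1`. For real `t` the same identity, taken at a variable point
`z`, shows `c̄ᵀ Ψ̂_n(t) = 0`; the Jordan-chain condition then makes `c̄ᵀ Ψ̂_n(z) a` vanish to
second order at `t`, and differentiating the identity at `t` gives
`2 |c|² = x'(t) Σ_{k<n} |v_k|²` with `x'(t) = (1 - t⁻²)/2 ≤ 0`. Finally
`Ψ̂_n(0) = 2⁻ⁿ P_{n,n}` is invertible.
-/

open Polynomial Matrix

/-- The matrix-valued pairing `⟨Q,R⟩ = Σ_{i,j} Q_i S_{i+j} R_jᵗ` induced by a sequence of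
moment matrices `S`. -/
noncomputable def mPairing {l : ℕ} (S : ℕ → Matrix (Fin l) (Fin l) ℝ)
    (Q R : Polynomial (Matrix (Fin l) (Fin l) ℝ)) : Matrix (Fin l) (Fin l) ℝ :=
  ∑ i ∈ Q.support, ∑ j ∈ R.support, Q.coeff i * S (i + j) * (R.coeff j)ᵀ

/-- All block Hankel matrices `[S_{i+j}]_{0≤i,j≤N}` are positive definite. -/
def HankelPosDef {l : ℕ} (S : ℕ → Matrix (Fin l) (Fin l) ℝ) : Prop :=
  ∀ N : ℕ, (Matrix.of fun p q : Fin (N+1) × Fin l =>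
    S ((p.1 : ℕ) + (q.1 : ℕ)) p.2 q.2).PosDef

/-- `P` is the family of orthonormal matrix polynomials of `S`: `P n` has degree `n`, its
leading coefficient is lower triangular with positive diagonal, and `⟨P n, P r⟩ = δ_{n,r} I`. -/
def IsMOPS {l : ℕ} (S : ℕ → Matrix (Fin l) (Fin l) ℝ)
    (P : ℕ → Polynomial (Matrix (Fin l) (Fin l) ℝ)) : Prop :=
  (∀ n : ℕ, (P n).degree ≤ (n : ℕ)) ∧
  (∀ n : ℕ, ∀ i j : Fin l, i < j → ((P n).coeff n) i j = 0) ∧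
  (∀ n : ℕ, ∀ i : Fin l, 0 < ((P n).coeff n) i i) ∧
  (∀ n r : ℕ, mPairing S (P n) (P r) = if n = r then (1 : Matrix (Fin l) (Fin l) ℝ) else 0)

/-- Evaluation of a real-matrix-coefficient polynomial at a complex point (entrywise
complexification). -/
noncomputable def evCM {l : ℕ} (Q : Polynomial (Matrix (Fin l) (Fin l) ℝ)) (z : ℂ) :
    Matrix (Fin l) (Fin l) ℂ :=
  ∑ i ∈ Q.support, z ^ i • (Q.coeff i).map (fun r : ℝ => (r : ℂ))

section ThreeTermRecurrence

variable {R ι : Type*} [CommRing R] [Fintype ι]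

def IsThreeTermRec (α β : ℕ → Matrix ι ι R) (x : R) (v : ℕ → ι → R) : Prop :=
  x • v 0 = α 1 *ᵥ v 1 + β 0 *ᵥ v 0 ∧
    ∀ k, x • v (k + 1) = α (k + 2) *ᵥ v (k + 2) + β (k + 1) *ᵥ v (k + 1) + (α (k + 1))ᵀ *ᵥ v k

lemma mulVec_dotProduct (M : Matrix ι ι R) (w v : ι → R) : (M *ᵥ w) ⬝ᵥ v = w ⬝ᵥ (Mᵀ *ᵥ v) := by
  rw [dotProduct_mulVec, vecMul_transpose]

variable {α β : ℕ → Matrix ι ι R} {x y : R} {v w : ℕ → ι → R}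

lemma IsThreeTermRec.christoffel_darboux (hβ : ∀ k, (β k)ᵀ = β k)
    (hv : IsThreeTermRec α β x v) (hw : IsThreeTermRec α β y w) (m : ℕ) :
    w m ⬝ᵥ (α (m + 1) *ᵥ v (m + 1)) - w (m + 1) ⬝ᵥ ((α (m + 1))ᵀ *ᵥ v m)
      = (x - y) * ∑ k ∈ Finset.range (m + 1), w k ⬝ᵥ v k := by
  induction m with
  | zero =>
    have ev := congrArg (w 0 ⬝ᵥ ·) hv.1
    have ew := congrArg (· ⬝ᵥ v 0) hw.1
    simp only [dotProduct_add, add_dotProduct, dotProduct_smul, smul_dotProduct, smul_eq_mul,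
      mulVec_dotProduct, hβ] at ev ew
    rw [Finset.sum_range_one]
    linear_combination ew - ev
  | succ m ih =>
    have ev := congrArg (w (m + 1) ⬝ᵥ ·) (hv.2 m)
    have ew := congrArg (· ⬝ᵥ v (m + 1)) (hw.2 m)
    simp only [dotProduct_add, add_dotProduct, dotProduct_smul, smul_dotProduct, smul_eq_mul,
      mulVec_dotProduct, hβ, transpose_transpose] at ev ew
    rw [Finset.sum_range_succ]
    linear_combination ew - ev + ih

lemma IsThreeTermRec.eq_zero_of_succ_eq_zero [DecidableEq ι] (hα : ∀ k, IsUnit (α (k + 1)).det)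
    (hv : IsThreeTermRec α β x v) {m : ℕ} (hm : v (m + 1) = 0)
    (hαm : (α (m + 1))ᵀ *ᵥ v m = 0) : v 0 = 0 := by
  have cancel : ∀ k, (α (k + 1))ᵀ *ᵥ v k = 0 → v k = 0 := fun k h =>
    mulVec_injective_of_isUnit ((isUnit_iff_isUnit_det _).mpr (by rw [det_transpose]; exact hα k))
      (by rw [h, mulVec_zero])
  induction m with
  | zero => exact cancel 0 hαm
  | succ m ih =>
    have hvm : v (m + 1) = 0 := cancel _ hαm
    refine ih hvm ?_
    have := hv.2 m
    rw [hm, hvm, smul_zero, mulVec_zero, mulVec_zero, zero_add, zero_add] at this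
    exact this.symm

end ThreeTermRecurrence

section Pairing

variable {l : ℕ} (S : ℕ → Matrix (Fin l) (Fin l) ℝ)

lemma mPairing_eq_sum_range {Q R : Polynomial (Matrix (Fin l) (Fin l) ℝ)} {N M : ℕ}
    (hQ : Q.natDegree < N) (hR : R.natDegree < M) :
    mPairing S Q R =
      ∑ i ∈ Finset.range N, ∑ j ∈ Finset.range M, Q.coeff i * S (i + j) * (R.coeff j)ᵀ := by
  unfold mPairing
  refine Finset.sum_subset_zero_on_sdiff (supp_subset_range hQ) (fun i hi => ?_) fun i _ => ?_
  · simp [notMem_support_iff.mp (Finset.mem_sdiff.mp hi).2]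
  · exact Finset.sum_subset_zero_on_sdiff (supp_subset_range hR)
      (fun j hj => by simp [notMem_support_iff.mp (Finset.mem_sdiff.mp hj).2]) fun _ _ => rfl

lemma mPairing_add_left (Q₁ Q₂ R : Polynomial (Matrix (Fin l) (Fin l) ℝ)) :
    mPairing S (Q₁ + Q₂) R = mPairing S Q₁ R + mPairing S Q₂ R := by
  set N := Q₁.natDegree + Q₂.natDegree + 1
  have hdeg := natDegree_add_le Q₁ Q₂
  rw [mPairing_eq_sum_range S (N := N) (by omega) (lt_add_one _),
    mPairing_eq_sum_range S (N := N) (by omega) (lt_add_one _),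
    mPairing_eq_sum_range S (N := N) (by omega) (lt_add_one _)]
  simp only [coeff_add, add_mul, Finset.sum_add_distrib]

lemma mPairing_C_mul_left (M : Matrix (Fin l) (Fin l) ℝ)
    (Q R : Polynomial (Matrix (Fin l) (Fin l) ℝ)) :
    mPairing S (C M * Q) R = M * mPairing S Q R := by
  have hdeg : (C M * Q).natDegree < Q.natDegree + 1 :=
    Nat.lt_succ_of_le (natDegree_mul_le.trans (by simp))
  rw [mPairing_eq_sum_range S hdeg (lt_add_one _),
    mPairing_eq_sum_range S (lt_add_one _) (lt_add_one _)]
  simp only [coeff_C_mul, Finset.mul_sum, mul_assoc]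

lemma mPairing_sum_left {ι : Type*} (s : Finset ι) (Q : ι → Polynomial (Matrix (Fin l) (Fin l) ℝ))
    (R : Polynomial (Matrix (Fin l) (Fin l) ℝ)) :
    mPairing S (∑ i ∈ s, Q i) R = ∑ i ∈ s, mPairing S (Q i) R :=
  map_sum (AddMonoidHom.mk' (fun Q => mPairing S Q R) fun _ _ => mPairing_add_left S _ _ _) Q s

lemma mPairing_X_mul_left (Q R : Polynomial (Matrix (Fin l) (Fin l) ℝ)) :
    mPairing S (X * Q) R = mPairing S Q (X * R) := by
  have hX : ∀ T : Polynomial (Matrix (Fin l) (Fin l) ℝ), (X * T).natDegree < T.natDegree + 2 :=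
    fun T => natDegree_mul_le.trans_lt
      (by have := natDegree_X_le (R := Matrix (Fin l) (Fin l) ℝ); omega)
  rw [mPairing_eq_sum_range S (hX Q) (lt_add_one _),
    mPairing_eq_sum_range S (lt_add_one _) (hX R), Finset.sum_range_succ']
  simp only [coeff_X_mul_zero, zero_mul, Finset.sum_const_zero, add_zero, coeff_X_mul]
  refine Finset.sum_congr rfl fun i _ => ?_
  rw [Finset.sum_range_succ' _ (R.natDegree + 1)]
  simp only [coeff_X_mul_zero, transpose_zero, mul_zero, add_zero, coeff_X_mul]
  exact Finset.sum_congr rfl fun j _ => by rw [Nat.add_right_comm]; rfl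

lemma mPairing_transpose (hS : ∀ j, (S j).IsSymm) (Q R : Polynomial (Matrix (Fin l) (Fin l) ℝ)) :
    (mPairing S Q R)ᵀ = mPairing S R Q := by
  unfold mPairing
  rw [Finset.sum_comm, transpose_sum]
  refine Finset.sum_congr rfl fun j _ => ?_
  rw [transpose_sum]
  refine Finset.sum_congr rfl fun i _ => ?_
  rw [transpose_mul, transpose_mul, transpose_transpose, (hS (i + j)).eq, add_comm i j, mul_assoc]

end Pairing

section Orthonormal

variable {l : ℕ} {S : ℕ → Matrix (Fin l) (Fin l) ℝ} {P : ℕ → Polynomial (Matrix (Fin l) (Fin l) ℝ)}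

lemma IsMOPS.isUnit_det_coeff (hP : IsMOPS S P) (k : ℕ) : IsUnit ((P k).coeff k).det := by
  rw [det_of_isLowerTriangular _ fun i j h => hP.2.1 k i j h]
  exact (Finset.prod_pos fun i _ => hP.2.2.1 k i).ne'.isUnit

lemma IsMOPS.degree_lt (hP : IsMOPS S P) (k : ℕ) : (P k).degree < (k + 1 : ℕ) :=
  (hP.1 k).trans_lt (by exact_mod_cast Nat.lt_succ_self k)

lemma IsMOPS.mPairing_sum_C_mul (hP : IsMOPS S P) (s : Finset ℕ)
    (c : ℕ → Matrix (Fin l) (Fin l) ℝ) (k : ℕ) :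
    mPairing S (∑ r ∈ s, C (c r) * P r) (P k) = if k ∈ s then c k else 0 := by
  simp only [mPairing_sum_left, mPairing_C_mul_left, hP.2.2.2, mul_ite, mul_one, mul_zero,
    Finset.sum_ite_eq']

lemma IsMOPS.eq_sum_mPairing (hP : IsMOPS S P) {m : ℕ} {Q : Polynomial (Matrix (Fin l) (Fin l) ℝ)}
    (hQ : Q.degree < m) : Q = ∑ r ∈ Finset.range m, C (mPairing S Q (P r)) * P r := by
  induction m generalizing Q with
  | zero => simpa using hQ
  | succ m ih =>
    set M := Q.coeff m * ((P m).coeff m)⁻¹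
    set Q' := Q - C M * P m
    have hQQ' : Q = Q' + C M * P m := (sub_add_cancel _ _).symm
    have hQ' : Q'.degree < m := by
      refine degree_lt_iff_coeff_zero _ _ |>.mpr fun j hj => ?_
      rcases hj.eq_or_lt with rfl | hj
      · simp [Q', M, coeff_C_mul, mul_assoc, nonsing_inv_mul _ (hP.isUnit_det_coeff m)]
      · simp [Q', coeff_eq_zero_of_degree_lt (hQ.trans_le (by exact_mod_cast hj)),
          coeff_eq_zero_of_degree_lt ((hP.degree_lt m).trans_le (by exact_mod_cast hj))]
    have hQ'exp := ih hQ'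
    have hpair : ∀ r, mPairing S Q (P r) = mPairing S Q' (P r) + if m = r then M else 0 := by
      intro r
      rw [hQQ', mPairing_add_left, mPairing_C_mul_left, hP.2.2.2]
      simp
    have hQ'm : mPairing S Q' (P m) = 0 := by
      rw [hQ'exp, hP.mPairing_sum_C_mul]
      simp
    have hlow : ∀ r ∈ Finset.range m, mPairing S Q (P r) = mPairing S Q' (P r) := fun r hr => by
      rw [hpair r, if_neg (Finset.mem_range.mp hr).ne', add_zero]
    rw [Finset.sum_range_succ, hpair m, hQ'm, if_pos rfl, zero_add, Finset.sum_congr rfl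
      fun r hr => by rw [hlow r hr], ← hQ'exp]
    exact hQQ'

lemma IsMOPS.mPairing_eq_zero_of_degree_lt (hP : IsMOPS S P)
    {Q : Polynomial (Matrix (Fin l) (Fin l) ℝ)} {k : ℕ} (hQ : Q.degree < k) :
    mPairing S Q (P k) = 0 := by
  rw [hP.eq_sum_mPairing hQ, hP.mPairing_sum_C_mul]
  simp

end Orthonormal

section Recurrence

variable {l : ℕ} (S : ℕ → Matrix (Fin l) (Fin l) ℝ) (P : ℕ → Polynomial (Matrix (Fin l) (Fin l) ℝ))

/-- Indexed as in the paper, `A_n = ⟨x P_{n-1}, P_n⟩`; only `n ≥ 1` is meaningful. -/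
noncomputable def recA (n : ℕ) : Matrix (Fin l) (Fin l) ℝ := mPairing S (X * P (n - 1)) (P n)

noncomputable def recB (n : ℕ) : Matrix (Fin l) (Fin l) ℝ := mPairing S (X * P n) (P n)

variable {S P}

lemma recB_transpose (hS : ∀ j, (S j).IsSymm) (n : ℕ) : (recB S P n)ᵀ = recB S P n := by
  rw [recB, mPairing_transpose S hS, mPairing_X_mul_left]

lemma IsMOPS.degree_X_mul_lt (hP : IsMOPS S P) (k : ℕ) :
    (X * P k).degree < ((k + 2 : ℕ) : WithBot ℕ) :=
  calc (X * P k).degree ≤ X.degree + (P k).degree := degree_mul_le _ _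
    _ ≤ 1 + (k : WithBot ℕ) := add_le_add degree_X_le (hP.1 k)
    _ < (k + 2 : ℕ) := by norm_cast; omega

lemma IsMOPS.X_mul_eq_sum (hP : IsMOPS S P) (k : ℕ) :
    X * P k = ∑ r ∈ Finset.range (k + 2), C (mPairing S (X * P k) (P r)) * P r :=
  hP.eq_sum_mPairing (hP.degree_X_mul_lt k)

lemma IsMOPS.mPairing_X_mul_eq_zero (hS : ∀ j, (S j).IsSymm) (hP : IsMOPS S P) {k r : ℕ}
    (h : r + 1 < k) : mPairing S (X * P k) (P r) = 0 := by
  have hr : (X * P r).degree < (k : WithBot ℕ) :=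
    (hP.degree_X_mul_lt r).trans_le (by exact_mod_cast h)
  rw [mPairing_X_mul_left, ← mPairing_transpose S hS, hP.mPairing_eq_zero_of_degree_lt hr,
    transpose_zero]

lemma IsMOPS.X_mul_zero (hP : IsMOPS S P) :
    X * P 0 = C (recA S P 1) * P 1 + C (recB S P 0) * P 0 := by
  rw [hP.X_mul_eq_sum 0, Finset.sum_range_succ, Finset.sum_range_one, add_comm]
  rfl

lemma IsMOPS.X_mul_succ (hS : ∀ j, (S j).IsSymm) (hP : IsMOPS S P) (k : ℕ) :
    X * P (k + 1) = C (recA S P (k + 2)) * P (k + 2) + C (recB S P (k + 1)) * P (k + 1)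
      + C (recA S P (k + 1))ᵀ * P k := by
  have hlow : ∑ r ∈ Finset.range k, C (mPairing S (X * P (k + 1)) (P r)) * P r = 0 :=
    Finset.sum_eq_zero fun r hr => by
      rw [hP.mPairing_X_mul_eq_zero hS (by simp at hr; omega), map_zero, zero_mul]
  have hA : mPairing S (X * P (k + 1)) (P k) = (recA S P (k + 1))ᵀ := by
    rw [recA, Nat.add_sub_cancel, mPairing_transpose S hS, mPairing_X_mul_left]
  rw [hP.X_mul_eq_sum (k + 1), Finset.sum_range_succ, Finset.sum_range_succ,
    Finset.sum_range_succ, hlow, zero_add, hA]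
  simp only [recA, recB, Nat.add_sub_cancel]
  abel

lemma IsMOPS.isUnit_det_recA (hP : IsMOPS S P) (k : ℕ) : IsUnit (recA S P (k + 1)).det := by
  have hcoeff := congrArg (coeff · (k + 1)) (hP.X_mul_eq_sum k)
  simp only [coeff_X_mul, finsetSum_coeff, coeff_C_mul] at hcoeff
  rw [Finset.sum_range_succ, Finset.sum_range_succ] at hcoeff
  rw [Finset.sum_eq_zero fun r hr => by
    rw [coeff_eq_zero_of_degree_lt ((hP.degree_lt r).trans_le (by simp at hr; norm_cast; omega)),
      mul_zero], zero_add, coeff_eq_zero_of_degree_lt (hP.degree_lt k), mul_zero,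
    zero_add] at hcoeff
  have hdet := congrArg det hcoeff
  rw [det_mul] at hdet
  exact isUnit_of_mul_isUnit_left (hdet ▸ hP.isUnit_det_coeff k)

end Recurrence

section ComplexEvaluation

variable {l : ℕ}

noncomputable def complexify : Matrix (Fin l) (Fin l) ℝ →+* Matrix (Fin l) (Fin l) ℂ :=
  Complex.ofRealHom.mapMatrix

lemma complexify_apply (M : Matrix (Fin l) (Fin l) ℝ) :
    complexify M = M.map (fun r : ℝ => (r : ℂ)) := rfl

lemma complexify_transpose (M : Matrix (Fin l) (Fin l) ℝ) : (complexify M)ᵀ = complexify Mᵀ := rfl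

lemma complexify_smul (r : ℝ) (M : Matrix (Fin l) (Fin l) ℝ) :
    complexify (r • M) = (r : ℂ) • complexify M := by
  ext
  simp [complexify_apply]

lemma isUnit_det_complexify {M : Matrix (Fin l) (Fin l) ℝ} (h : IsUnit M.det) :
    IsUnit (complexify M).det := by
  rw [complexify, ← RingHom.map_det]
  exact h.map _

lemma star_complexify_mulVec (M : Matrix (Fin l) (Fin l) ℝ) (v : Fin l → ℂ) :
    star (complexify M *ᵥ v) = complexify M *ᵥ star v := by
  ext i
  simp [mulVec, dotProduct, complexify_apply, Complex.conj_ofReal]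

noncomputable def evCMRingHom (z : ℂ) :
    Polynomial (Matrix (Fin l) (Fin l) ℝ) →+* Matrix (Fin l) (Fin l) ℂ :=
  eval₂RingHom' complexify (z • 1) fun _ => (Commute.one_right _).smul_right z

lemma evCMRingHom_apply (z : ℂ) (Q : Polynomial (Matrix (Fin l) (Fin l) ℝ)) :
    evCMRingHom z Q = evCM Q z := by
  simp only [evCMRingHom, eval₂RingHom'_apply, eval₂_eq_sum, Polynomial.sum_def, evCM,
    _root_.smul_pow, one_pow, mul_smul_comm, mul_one, complexify_apply]

@[simp] lemma evCM_add (Q R : Polynomial (Matrix (Fin l) (Fin l) ℝ)) (z : ℂ) :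
    evCM (Q + R) z = evCM Q z + evCM R z := by
  simp only [← evCMRingHom_apply, map_add]

@[simp] lemma evCM_mul (Q R : Polynomial (Matrix (Fin l) (Fin l) ℝ)) (z : ℂ) :
    evCM (Q * R) z = evCM Q z * evCM R z := by
  simp only [← evCMRingHom_apply, map_mul]

@[simp] lemma evCM_C (M : Matrix (Fin l) (Fin l) ℝ) (z : ℂ) : evCM (C M) z = complexify M := by
  rw [← evCMRingHom_apply, evCMRingHom, eval₂RingHom'_apply, eval₂_C]

@[simp] lemma evCM_X (z : ℂ) : evCM (X : Polynomial (Matrix (Fin l) (Fin l) ℝ)) z = z • 1 := by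
  rw [← evCMRingHom_apply, evCMRingHom, eval₂RingHom'_apply, eval₂_X]

lemma evCM_at_zero (Q : Polynomial (Matrix (Fin l) (Fin l) ℝ)) :
    evCM Q 0 = complexify (Q.coeff 0) := by
  rw [← evCMRingHom_apply, evCMRingHom, eval₂RingHom'_apply, zero_smul, eval₂_at_zero]

lemma evCM_eq_sum_range {Q : Polynomial (Matrix (Fin l) (Fin l) ℝ)} {m : ℕ} (hQ : Q.natDegree < m)
    (z : ℂ) : evCM Q z = ∑ k ∈ Finset.range m, z ^ k • complexify (Q.coeff k) :=
  Finset.sum_subset_zero_on_sdiff (supp_subset_range hQ)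
    (fun k hk => by simp [notMem_support_iff.mp (Finset.mem_sdiff.mp hk).2]) fun _ _ => rfl

lemma evCM_conj_mulVec (Q : Polynomial (Matrix (Fin l) (Fin l) ℝ)) (z : ℂ) (a : Fin l → ℂ) :
    evCM Q (starRingEnd ℂ z) *ᵥ star a = star (evCM Q z *ᵥ a) := by
  ext i
  simp [evCM, mulVec, dotProduct, Matrix.sum_apply, Finset.sum_mul, Complex.conj_ofReal]

end ComplexEvaluation

lemma IsMOPS.isThreeTermRec_evCM {l : ℕ} {S : ℕ → Matrix (Fin l) (Fin l) ℝ}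
    {P : ℕ → Polynomial (Matrix (Fin l) (Fin l) ℝ)} (hS : ∀ j, (S j).IsSymm) (hP : IsMOPS S P)
    (y : ℂ) (b : Fin l → ℂ) :
    IsThreeTermRec (fun k => complexify (recA S P k)) (fun k => complexify (recB S P k)) y
      (fun k => evCM (P k) y *ᵥ b) := by
  constructor
  · have := congrArg (evCM · y *ᵥ b) hP.X_mul_zero
    simpa [add_mulVec, ← mulVec_mulVec, smul_mulVec] using this
  · intro k
    have := congrArg (evCM · y *ᵥ b) (hP.X_mul_succ hS k)
    simpa [add_mulVec, ← mulVec_mulVec, smul_mulVec, complexify_transpose] using this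

section SandwichPoly

variable {l : ℕ}

noncomputable def sandwichPoly (r a : Fin l → ℂ) (Q : Polynomial (Matrix (Fin l) (Fin l) ℝ)) :
    ℂ[X] :=
  ∑ i ∈ Q.support, monomial i (r ⬝ᵥ (complexify (Q.coeff i) *ᵥ a))

lemma sandwichPoly_coeff (r a : Fin l → ℂ) (Q : Polynomial (Matrix (Fin l) (Fin l) ℝ)) (k : ℕ) :
    (sandwichPoly r a Q).coeff k = r ⬝ᵥ (complexify (Q.coeff k) *ᵥ a) := by
  simp only [sandwichPoly, finsetSum_coeff, coeff_monomial, Finset.sum_ite_eq']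
  split_ifs with hk
  · rfl
  · simp [notMem_support_iff.mp hk]

lemma sandwichPoly_eval (r a : Fin l → ℂ) (Q : Polynomial (Matrix (Fin l) (Fin l) ℝ)) (z : ℂ) :
    (sandwichPoly r a Q).eval z = r ⬝ᵥ (evCM Q z *ᵥ a) := by
  simp [sandwichPoly, evCM, eval_finsetSum, sum_mulVec, dotProduct_sum, smul_mulVec, mul_comm,
    complexify_apply]

lemma sandwichPoly_derivative (r a : Fin l → ℂ) (Q : Polynomial (Matrix (Fin l) (Fin l) ℝ)) :
    sandwichPoly r a (derivative Q) = derivative (sandwichPoly r a Q) := by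
  ext k
  rw [sandwichPoly_coeff, coeff_derivative, coeff_derivative, sandwichPoly_coeff, map_mul,
    ← Nat.cast_add_one, map_natCast, ← nsmul_eq_mul', smul_mulVec, dotProduct_smul, nsmul_eq_mul,
    mul_comm, Nat.cast_add_one]

lemma hasDerivAt_dotProduct_evCM (r a : Fin l → ℂ) (Q : Polynomial (Matrix (Fin l) (Fin l) ℝ))
    (z : ℂ) :
    HasDerivAt (fun w => r ⬝ᵥ (evCM Q w *ᵥ a)) (r ⬝ᵥ (evCM (derivative Q) z *ᵥ a)) z := by
  simpa only [← sandwichPoly_eval, sandwichPoly_derivative] using (sandwichPoly r a Q).hasDerivAt z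

lemma eq_zero_of_evCM_eq_zero {Q : Polynomial (Matrix (Fin l) (Fin l) ℝ)}
    (h : ∀ z, z ≠ 0 → evCM Q z = 0) : Q = 0 := by
  ext k i j
  have hroots : sandwichPoly (Pi.single i 1) (Pi.single j 1) Q = 0 := by
    refine eq_zero_of_infinite_isRoot _
      ((Set.finite_singleton 0).infinite_compl.mono fun z hz => ?_)
    simp [IsRoot, sandwichPoly_eval, h z hz]
  have := congrArg (coeff · k) hroots
  simpa [sandwichPoly_coeff, complexify_apply, mulVec_single, single_dotProduct] using this

end SandwichPoly

section Joukowski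

variable {l : ℕ}

noncomputable def joukowski (z : ℂ) : ℂ := (z + z⁻¹) / 2

lemma pow_mul_joukowski_pow {z : ℂ} (hz : z ≠ 0) {k m : ℕ} (hk : k ≤ m) :
    z ^ m * joukowski z ^ k = (2 : ℂ)⁻¹ ^ k * ((z ^ 2 + 1) ^ k * z ^ (m - k)) := by
  obtain ⟨j, rfl⟩ := Nat.exists_eq_add_of_le hk
  have hj : joukowski z = (2 : ℂ)⁻¹ * (z ^ 2 + 1) * z⁻¹ := by
    rw [joukowski]; field_simp
  rw [hj, Nat.add_sub_cancel_left, mul_pow, mul_pow, inv_pow z, pow_add]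
  field_simp

lemma hasDerivAt_joukowski {z : ℂ} (hz : z ≠ 0) :
    HasDerivAt joukowski ((1 - (z ^ 2)⁻¹) / 2) z := by
  rw [show (1 - (z ^ 2)⁻¹) / 2 = (1 + -(z ^ 2)⁻¹) / 2 by ring]
  exact ((hasDerivAt_id z).add (hasDerivAt_inv hz)).div_const 2

lemma conj_joukowski_ofReal (t : ℝ) : starRingEnd ℂ (joukowski t) = joukowski t := by
  rw [joukowski, map_div₀, map_add, map_inv₀, Complex.conj_ofReal, map_ofNat]

lemma joukowski_sub_conj (z : ℂ) : joukowski z - starRingEnd ℂ (joukowski z)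
    = (z - starRingEnd ℂ z) * (((1 - (Complex.normSq z)⁻¹) / 2 : ℝ) : ℂ) := by
  rw [joukowski, map_div₀, map_add, map_inv₀, map_ofNat, Complex.inv_def, Complex.inv_def,
    Complex.normSq_conj, Complex.conj_conj]
  push_cast
  ring

noncomputable def joukowskiPullback (m : ℕ) (Q : Polynomial (Matrix (Fin l) (Fin l) ℝ)) :
    Polynomial (Matrix (Fin l) (Fin l) ℝ) :=
  ∑ k ∈ Finset.range (m + 1), C ((2 : ℝ)⁻¹ ^ k • Q.coeff k) * ((X ^ 2 + 1) ^ k * X ^ (m - k))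

lemma evCM_joukowskiPullback {Q : Polynomial (Matrix (Fin l) (Fin l) ℝ)} {m : ℕ}
    (hQ : Q.natDegree ≤ m) {z : ℂ} (hz : z ≠ 0) :
    evCM (joukowskiPullback m Q) z = z ^ m • evCM Q (joukowski z) := by
  have hpow : ∀ k, evCM ((X ^ 2 + 1) ^ k * X ^ (m - k) : Polynomial (Matrix (Fin l) (Fin l) ℝ)) z
      = algebraMap ℂ _ ((z ^ 2 + 1) ^ k * z ^ (m - k)) := fun k => by
    simp only [← evCMRingHom_apply, map_mul, map_pow, map_add, map_one]
    rw [evCMRingHom_apply, evCM_X, ← Algebra.algebraMap_eq_smul_one]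
  rw [joukowskiPullback, evCM_eq_sum_range (Nat.lt_succ_of_le hQ), Finset.smul_sum,
    ← evCMRingHom_apply, map_sum]
  refine Finset.sum_congr rfl fun k hk => ?_
  rw [map_mul, evCMRingHom_apply, evCMRingHom_apply, hpow, evCM_C, smul_smul,
    pow_mul_joukowski_pow hz (Finset.mem_range_succ_iff.mp hk), complexify_smul,
    ← Algebra.commutes, ← Algebra.smul_def, smul_smul]
  push_cast
  congr 1
  ring

lemma joukowskiPullback_coeff_zero (m : ℕ) (Q : Polynomial (Matrix (Fin l) (Fin l) ℝ)) :
    (joukowskiPullback m Q).coeff 0 = (2 : ℝ)⁻¹ ^ m • Q.coeff m := by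
  rw [← constantCoeff_apply, joukowskiPullback, map_sum, Finset.sum_eq_single m]
  · simp only [map_mul, map_pow, map_add, map_one]
    simp
  · intro k hk hkm
    have : m - k ≠ 0 := by simp at hk; omega
    simp only [map_mul, map_pow]
    simp [this]
  · simp

end Joukowski

open scoped ComplexOrder in
lemma eq_zero_of_two_mul_star_dotProduct_self_eq {ι : Type*} [Fintype ι] {c : ι → ℂ} {κ : ℝ}
    {T : ℂ} (hκ : κ ≤ 0) (hT : 0 ≤ T) (h : 2 * (star c ⬝ᵥ c) = κ * T) : c = 0 := by
  have hc := dotProduct_star_self_nonneg c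
  have hle : star c ⬝ᵥ c ≤ 0 := calc
    star c ⬝ᵥ c ≤ 2 * (star c ⬝ᵥ c) := by rw [two_mul]; exact le_add_of_nonneg_left hc
    _ = κ * T := h
    _ ≤ 0 := mul_nonpos_of_nonpos_of_nonneg (by exact_mod_cast hκ) hT
  exact dotProduct_star_self_eq_zero.mp (le_antisymm hle hc)

section PsiHat

def IsPsiHat {l : ℕ} (S : ℕ → Matrix (Fin l) (Fin l) ℝ)
    (P : ℕ → Polynomial (Matrix (Fin l) (Fin l) ℝ)) (n : ℕ)
    (Ψ : Polynomial (Matrix (Fin l) (Fin l) ℝ)) : Prop :=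
  ∀ z : ℂ, z ≠ 0 → evCM Ψ z = z ^ n • (evCM (P n) (joukowski z)
    - (2 * z) • ((complexify (recA S P n))ᵀ * evCM (P (n - 1)) (joukowski z)))

variable {l n : ℕ} {S : ℕ → Matrix (Fin l) (Fin l) ℝ}
  {P : ℕ → Polynomial (Matrix (Fin l) (Fin l) ℝ)} {Ψ : Polynomial (Matrix (Fin l) (Fin l) ℝ)}

lemma IsPsiHat.eq_joukowskiPullback (hP : IsMOPS S P) (hn : 1 ≤ n) (hΨ : IsPsiHat S P n Ψ) :
    Ψ = joukowskiPullback n (P n)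
      - C (2 • (recA S P n)ᵀ) * X ^ 2 * joukowskiPullback (n - 1) (P (n - 1)) := by
  obtain ⟨m, rfl⟩ := Nat.exists_eq_add_of_le' hn
  have hdeg : ∀ k, (P k).natDegree ≤ k := fun k => natDegree_le_iff_degree_le.mpr (hP.1 k)
  refine sub_eq_zero.mp (eq_zero_of_evCM_eq_zero fun z hz => ?_)
  rw [← evCMRingHom_apply, map_sub, map_sub, map_mul, map_mul, map_pow]
  simp only [evCMRingHom_apply, evCM_joukowskiPullback (hdeg _) hz, evCM_C, evCM_X, hΨ z hz]
  rw [map_nsmul, ← complexify_transpose, Nat.add_sub_cancel]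
  simp only [_root_.smul_pow, one_pow, smul_mul_assoc, mul_smul_comm, mul_one, smul_sub, smul_smul]
  module

lemma IsPsiHat.isUnit_det_evCM_zero (hP : IsMOPS S P) (hn : 1 ≤ n) (hΨ : IsPsiHat S P n Ψ) :
    IsUnit (evCM Ψ 0).det := by
  have hcoeff : Ψ.coeff 0 = (2 : ℝ)⁻¹ ^ n • (P n).coeff n := by
    rw [hΨ.eq_joukowskiPullback hP hn, coeff_sub, joukowskiPullback_coeff_zero, mul_coeff_zero,
      mul_coeff_zero, coeff_X_pow, if_neg (by norm_num), mul_zero, zero_mul, sub_zero]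
  rw [evCM_at_zero, hcoeff]
  refine isUnit_det_complexify ?_
  rw [det_smul]
  exact (IsUnit.pow _ (by norm_num)).mul (hP.isUnit_det_coeff n)

lemma IsPsiHat.mulVec_eq_of_mulVec_eq_zero (hΨ : IsPsiHat S P n Ψ) {z : ℂ} (hz : z ≠ 0)
    {a : Fin l → ℂ} (ha : evCM Ψ z *ᵥ a = 0) :
    evCM (P n) (joukowski z) *ᵥ a
      = (2 * z) • ((complexify (recA S P n))ᵀ *ᵥ (evCM (P (n - 1)) (joukowski z) *ᵥ a)) := by
  rw [hΨ z hz, smul_mulVec, smul_eq_zero, sub_mulVec, sub_eq_zero, smul_mulVec,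
    ← mulVec_mulVec] at ha
  exact ha.resolve_left (pow_ne_zero n hz)

lemma IsPsiHat.eq_zero_of_mulVec_eq_zero (hS : ∀ j, (S j).IsSymm) (hP : IsMOPS S P) (hn : 1 ≤ n)
    (hΨ : IsPsiHat S P n Ψ) {z : ℂ} (hz : z ≠ 0) {a : Fin l → ℂ} (ha : evCM Ψ z *ᵥ a = 0)
    (hc : (complexify (recA S P n))ᵀ *ᵥ (evCM (P (n - 1)) (joukowski z) *ᵥ a) = 0) : a = 0 := by
  obtain ⟨m, rfl⟩ := Nat.exists_eq_add_of_le' hn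
  have hvn := hΨ.mulVec_eq_of_mulVec_eq_zero hz ha
  rw [Nat.add_sub_cancel] at hc hvn
  rw [hc, smul_zero] at hvn
  have hv0 := (hP.isThreeTermRec_evCM hS (joukowski z) a).eq_zero_of_succ_eq_zero
    (fun k => isUnit_det_complexify (hP.isUnit_det_recA k)) hvn hc
  have hP0 : P 0 = C ((P 0).coeff 0) := eq_C_of_degree_le_zero (hP.1 0)
  rw [hP0, evCM_C] at hv0
  exact mulVec_injective_of_isUnit ((isUnit_iff_isUnit_det _).mpr
    (isUnit_det_complexify (hP.isUnit_det_coeff 0))) (by simpa using hv0)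

/-- Christoffel–Darboux between `P_k(x(z)) b` and the conjugate of `P_k(x(z₀)) a`, whose top
term is `2 z̄₀ c̄` because `Ψ̂_n(z₀) a = 0`. -/
lemma IsPsiHat.christoffel_darboux (hS : ∀ j, (S j).IsSymm) (hP : IsMOPS S P) (hn : 1 ≤ n)
    (hΨ : IsPsiHat S P n Ψ) {z₀ : ℂ} (hz₀ : z₀ ≠ 0) {a c : Fin l → ℂ} (ha : evCM Ψ z₀ *ᵥ a = 0)
    (hc : (complexify (recA S P n))ᵀ *ᵥ (evCM (P (n - 1)) (joukowski z₀) *ᵥ a) = c)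
    {z : ℂ} (hz : z ≠ 0) (b : Fin l → ℂ) :
    (joukowski z - starRingEnd ℂ (joukowski z₀)) * ∑ k ∈ Finset.range n,
        star (evCM (P k) (joukowski z₀) *ᵥ a) ⬝ᵥ (evCM (P k) (joukowski z) *ᵥ b)
      = (z ^ n)⁻¹ * (star c ⬝ᵥ (evCM Ψ z *ᵥ b)) + 2 * (z - starRingEnd ℂ z₀) *
        (star c ⬝ᵥ ((complexify (recA S P n))ᵀ *ᵥ (evCM (P (n - 1)) (joukowski z) *ᵥ b))) := by
  obtain ⟨m, rfl⟩ := Nat.exists_eq_add_of_le' hn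
  have hvn := hΨ.mulVec_eq_of_mulVec_eq_zero hz₀ ha
  rw [Nat.add_sub_cancel] at hc hvn ⊢
  rw [hc] at hvn
  set α := fun k => complexify (recA S P k)
  have hβ : ∀ k, (complexify (recB S P k))ᵀ = complexify (recB S P k) := fun k => by
    rw [complexify_transpose, recB_transpose hS]
  have hcd := (hP.isThreeTermRec_evCM hS (joukowski z) b).christoffel_darboux hβ
    (hP.isThreeTermRec_evCM hS (starRingEnd ℂ (joukowski z₀)) (star a)) m
  have hVn : evCM (P (m + 1)) (joukowski z) *ᵥ b = (z ^ (m + 1))⁻¹ • (evCM Ψ z *ᵥ b)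
      + (2 * z) • ((α (m + 1))ᵀ *ᵥ (evCM (P m) (joukowski z) *ᵥ b)) := by
    rw [hΨ z hz, smul_mulVec, smul_smul, inv_mul_cancel₀ (pow_ne_zero _ hz), one_smul,
      sub_mulVec, smul_mulVec, ← mulVec_mulVec, Nat.add_sub_cancel]
    abel
  have hstar : (α (m + 1))ᵀ *ᵥ star (evCM (P m) (joukowski z₀) *ᵥ a) = star c := by
    rw [← hc, complexify_transpose, star_complexify_mulVec]
  have e1 : star (evCM (P m) (joukowski z₀) *ᵥ a)
        ⬝ᵥ (α (m + 1) *ᵥ (evCM (P (m + 1)) (joukowski z) *ᵥ b))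
      = star c ⬝ᵥ (evCM (P (m + 1)) (joukowski z) *ᵥ b) := by
    rw [dotProduct_mulVec, ← mulVec_transpose, hstar]
  have e2 : star (evCM (P (m + 1)) (joukowski z₀) *ᵥ a)
        ⬝ᵥ ((α (m + 1))ᵀ *ᵥ (evCM (P m) (joukowski z) *ᵥ b))
      = 2 * starRingEnd ℂ z₀ * (star c ⬝ᵥ ((α (m + 1))ᵀ *ᵥ (evCM (P m) (joukowski z) *ᵥ b))) := by
    rw [hvn, star_smul, smul_dotProduct, smul_eq_mul, Complex.star_def, map_mul, map_ofNat]
  simp only [evCM_conj_mulVec] at hcd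
  rw [e1, e2, hVn, dotProduct_add, dotProduct_smul, dotProduct_smul, smul_eq_mul,
    smul_eq_mul] at hcd
  linear_combination -hcd

open scoped ComplexOrder in
lemma IsPsiHat.eq_zero_of_im_ne_zero (hS : ∀ j, (S j).IsSymm) (hP : IsMOPS S P) (hn : 1 ≤ n)
    (hΨ : IsPsiHat S P n Ψ) {z : ℂ} (him : z.im ≠ 0) (hz1 : ‖z‖ ≤ 1) {a : Fin l → ℂ}
    (ha : evCM Ψ z *ᵥ a = 0) : a = 0 := by
  have hz : z ≠ 0 := fun h => him (by simp [h])
  set c := (complexify (recA S P n))ᵀ *ᵥ (evCM (P (n - 1)) (joukowski z) *ᵥ a)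
  have hcd := hΨ.christoffel_darboux hS hP hn hz ha (c := c) rfl hz a
  rw [ha, dotProduct_zero, mul_zero, zero_add] at hcd
  have hzz : z - starRingEnd ℂ z ≠ 0 := by
    rw [Complex.sub_conj]
    simpa using him
  have hκ : (1 - (Complex.normSq z)⁻¹) / 2 ≤ 0 := by
    have hpos := Complex.normSq_pos.mpr hz
    have hle : Complex.normSq z ≤ 1 := by
      rw [Complex.normSq_eq_norm_sq]; nlinarith [norm_nonneg z]
    linarith [(one_le_inv₀ hpos).mpr hle]
  set T := ∑ k ∈ Finset.range n,
    star (evCM (P k) (joukowski z) *ᵥ a) ⬝ᵥ (evCM (P k) (joukowski z) *ᵥ a)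
  have hT : 0 ≤ T := Finset.sum_nonneg fun k _ => dotProduct_star_self_nonneg _
  refine hΨ.eq_zero_of_mulVec_eq_zero hS hP hn hz ha
    (eq_zero_of_two_mul_star_dotProduct_self_eq hκ hT (mul_left_cancel₀ hzz ?_))
  linear_combination -hcd + T * joukowski_sub_conj z

lemma IsPsiHat.star_dotProduct_mulVec_eq_zero_of_real (hS : ∀ j, (S j).IsSymm) (hP : IsMOPS S P)
    (hn : 1 ≤ n) (hΨ : IsPsiHat S P n Ψ) {t : ℝ} (ht0 : t ≠ 0) {a c : Fin l → ℂ}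
    (ha : evCM Ψ t *ᵥ a = 0)
    (hc : (complexify (recA S P n))ᵀ *ᵥ (evCM (P (n - 1)) (joukowski t) *ᵥ a) = c)
    (b : Fin l → ℂ) : star c ⬝ᵥ (evCM Ψ t *ᵥ b) = 0 := by
  have ht : (t : ℂ) ≠ 0 := by exact_mod_cast ht0
  have hcd := hΨ.christoffel_darboux hS hP hn ht ha hc ht b
  rw [conj_joukowski_ofReal, Complex.conj_ofReal, sub_self, sub_self, zero_mul, mul_zero,
    zero_mul, add_zero] at hcd
  exact (mul_eq_zero.mp hcd.symm).resolve_left (inv_ne_zero (pow_ne_zero _ ht))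

/-- Differentiate `IsPsiHat.christoffel_darboux` (with `z₀ = t`, `b = a`) at `z = t`: since
`star c ⬝ᵥ Ψ(z) a` has a double zero at `t`, only these two terms survive. -/
lemma IsPsiHat.two_mul_star_dotProduct_self_eq_of_real (hS : ∀ j, (S j).IsSymm)
    (hP : IsMOPS S P) (hn : 1 ≤ n) (hΨ : IsPsiHat S P n Ψ) {t : ℝ} (ht0 : t ≠ 0)
    {a b c : Fin l → ℂ} (ha : evCM Ψ t *ᵥ a = 0)
    (hb : evCM Ψ t *ᵥ b + evCM (derivative Ψ) t *ᵥ a = 0)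
    (hc : (complexify (recA S P n))ᵀ *ᵥ (evCM (P (n - 1)) (joukowski t) *ᵥ a) = c) :
    2 * (star c ⬝ᵥ c) = (((1 - (t ^ 2)⁻¹) / 2 : ℝ) : ℂ) * ∑ k ∈ Finset.range n,
      star (evCM (P k) (joukowski t) *ᵥ a) ⬝ᵥ (evCM (P k) (joukowski t) *ᵥ a) := by
  have ht : (t : ℂ) ≠ 0 := by exact_mod_cast ht0
  set A := (complexify (recA S P n))ᵀ
  set g := fun z => ∑ k ∈ Finset.range n,
    star (evCM (P k) (joukowski t) *ᵥ a) ⬝ᵥ (evCM (P k) (joukowski z) *ᵥ a)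
  have hcd : ∀ z, z ≠ 0 → (joukowski z - joukowski t) * g z
      = (z ^ n)⁻¹ * (star c ⬝ᵥ (evCM Ψ z *ᵥ a))
        + 2 * (z - t) * ((star c ᵥ* A) ⬝ᵥ (evCM (P (n - 1)) (joukowski z) *ᵥ a)) := fun z hz => by
    have := hΨ.christoffel_darboux hS hP hn ht ha hc hz a
    rwa [conj_joukowski_ofReal, Complex.conj_ofReal, dotProduct_mulVec (star c) A] at this
  have hf' : star c ⬝ᵥ (evCM (derivative Ψ) t *ᵥ a) = 0 := by
    rw [eq_neg_of_add_eq_zero_right hb, dotProduct_neg,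
      hΨ.star_dotProduct_mulVec_eq_zero_of_real hS hP hn ht0 ha hc, neg_zero]
  have hF : HasDerivAt (fun z => (joukowski z - joukowski t) * g z)
      ((1 - ((t : ℂ) ^ 2)⁻¹) / 2 * g t) t := by
    have hg := HasDerivAt.fun_sum fun k (_ : k ∈ Finset.range n) =>
      (hasDerivAt_dotProduct_evCM (star (evCM (P k) (joukowski t) *ᵥ a)) a (P k) _).comp (t : ℂ)
        (hasDerivAt_joukowski ht)
    refine (((hasDerivAt_joukowski ht).sub_const (joukowski t)).mul hg).congr_deriv ?_
    rw [sub_self, zero_mul, add_zero]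
    rfl
  have hG : HasDerivAt (fun z => (z ^ n)⁻¹ * (star c ⬝ᵥ (evCM Ψ z *ᵥ a))
      + 2 * (z - t) * ((star c ᵥ* A) ⬝ᵥ (evCM (P (n - 1)) (joukowski z) *ᵥ a)))
      (2 * (star c ⬝ᵥ c)) t := by
    have hh := (hasDerivAt_dotProduct_evCM (star c ᵥ* A) a (P (n - 1)) _).comp (t : ℂ)
      (hasDerivAt_joukowski ht)
    refine ((((hasDerivAt_pow n (t : ℂ)).inv (pow_ne_zero n ht)).mul
      (hasDerivAt_dotProduct_evCM (star c) a Ψ t)).add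
      ((((hasDerivAt_id (t : ℂ)).sub_const (t : ℂ)).const_mul 2).mul hh)).congr_deriv ?_
    simp only [ha, hf', dotProduct_zero, mul_zero, zero_add, id, sub_self, zero_mul, add_zero,
      mul_one, Function.comp_apply, ← dotProduct_mulVec, hc]
  have hderiv := hF.unique (hG.congr_of_eventuallyEq
    ((eventually_ne_nhds ht).mono fun z hz => hcd z hz))
  rw [← hderiv]
  push_cast
  rfl

open scoped ComplexOrder in
lemma IsPsiHat.eq_zero_of_real (hS : ∀ j, (S j).IsSymm) (hP : IsMOPS S P) (hn : 1 ≤ n)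
    (hΨ : IsPsiHat S P n Ψ) {t : ℝ} (ht0 : t ≠ 0) (ht1 : |t| ≤ 1) {a b : Fin l → ℂ}
    (ha : evCM Ψ t *ᵥ a = 0) (hb : evCM Ψ t *ᵥ b + evCM (derivative Ψ) t *ᵥ a = 0) : a = 0 := by
  have hκ : (1 - (t ^ 2)⁻¹) / 2 ≤ 0 := by
    have hle : t ^ 2 ≤ 1 := by nlinarith [abs_le.mp ht1]
    linarith [(one_le_inv₀ (by positivity)).mpr hle]
  exact hΨ.eq_zero_of_mulVec_eq_zero hS hP hn (by exact_mod_cast ht0) ha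
    (eq_zero_of_two_mul_star_dotProduct_self_eq hκ
      (Finset.sum_nonneg fun k _ => dotProduct_star_self_nonneg _)
      (hΨ.two_mul_star_dotProduct_self_eq_of_real hS hP hn ht0 ha hb rfl))

end PsiHat

theorem psiHat_invertible_and_simple_zeros_general
    (l n : ℕ) (hn : 1 ≤ n)
    (S : ℕ → Matrix (Fin l) (Fin l) ℝ)
    (hSsymm : ∀ j, (S j).IsSymm)
    (P : ℕ → Polynomial (Matrix (Fin l) (Fin l) ℝ))
    (hP : IsMOPS S P)
    (Ψ : Polynomial (Matrix (Fin l) (Fin l) ℝ))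
    (hΨ : ∀ z : ℂ, z ≠ 0 →
      evCM Ψ z = z ^ n •
        (evCM (P n) ((z + z⁻¹) / 2)
          - (2 * z) • (((mPairing S (Polynomial.X * P (n-1)) (P n)).map
                (fun r : ℝ => (r : ℂ)))ᵀ * evCM (P (n-1)) ((z + z⁻¹) / 2)))) :
    (∀ z : ℂ, ‖z‖ ≤ 1 →
        (¬ ∃ t : ℝ, t ∈ Set.Icc (-1 : ℝ) 1 ∧ t ≠ 0 ∧ z = (t : ℂ)) →
        (evCM Ψ z).det ≠ 0) ∧
    (∀ t : ℝ, t ∈ Set.Icc (-1 : ℝ) 1 → t ≠ 0 →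
      ∀ a b : Fin l → ℂ,
        evCM Ψ (t : ℂ) *ᵥ a = 0 →
        (evCM Ψ (t : ℂ) *ᵥ b) + (evCM (Polynomial.derivative Ψ) (t : ℂ) *ᵥ a) = 0 →
        a = 0) := by
  have hΨ : IsPsiHat S P n Ψ := hΨ
  refine ⟨fun z hz1 hnotreal => ?_, fun t ht ht0 a b ha hb =>
    hΨ.eq_zero_of_real hSsymm hP hn ht0 (abs_le.mpr ht) ha hb⟩
  rcases eq_or_ne z 0 with rfl | hz
  · exact (hΨ.isUnit_det_evCM_zero hP hn).ne_zero
  have him : z.im ≠ 0 := fun him => hnotreal ⟨z.re,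
    abs_le.mp ((Complex.abs_re_eq_norm.mpr him).trans_le hz1),
    fun hre => hz (Complex.ext hre him), Complex.ext rfl (by simp [him])⟩
  intro hdet
  obtain ⟨a, ha0, ha⟩ := exists_mulVec_eq_zero_iff.mpr hdet
  exact ha0 (hΨ.eq_zero_of_im_ne_zero hSsymm hP hn him hz1 ha)

/-- The zeros of `Ψ̂_n` in the closed unit disk lie in `[-1,0)∪(0,1]` and are simple
(in the sense of Newton–Jost). -/
theorem psiHat_invertible_and_simple_zeros
    (l n : ℕ) (hl : 1 ≤ l) (hn : 1 ≤ n)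
    (S : ℕ → Matrix (Fin l) (Fin l) ℝ)
    (hSsymm : ∀ j, (S j).IsSymm)
    (hSpd : HankelPosDef S)
    (P : ℕ → Polynomial (Matrix (Fin l) (Fin l) ℝ))
    (hP : IsMOPS S P)
    (Ψ : Polynomial (Matrix (Fin l) (Fin l) ℝ))
    (hΨdeg : Ψ.degree ≤ (2 * n : ℕ))
    (hΨ : ∀ z : ℂ, z ≠ 0 →
      evCM Ψ z = z ^ n •
        (evCM (P n) ((z + z⁻¹) / 2)
          - (2 * z) • (((mPairing S (Polynomial.X * P (n-1)) (P n)).map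
                (fun r : ℝ => (r : ℂ)))ᵀ * evCM (P (n-1)) ((z + z⁻¹) / 2)))) :
    (∀ z : ℂ, ‖z‖ ≤ 1 →
        (¬ ∃ t : ℝ, t ∈ Set.Icc (-1 : ℝ) 1 ∧ t ≠ 0 ∧ z = (t : ℂ)) →
        (evCM Ψ z).det ≠ 0) ∧
    (∀ t : ℝ, t ∈ Set.Icc (-1 : ℝ) 1 → t ≠ 0 →
      ∀ a b : Fin l → ℂ,
        evCM Ψ (t : ℂ) *ᵥ a = 0 →
        (evCM Ψ (t : ℂ) *ᵥ b) + (evCM (Polynomial.derivative Ψ) (t : ℂ) *ᵥ a) = 0 →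
        a = 0) :=
  psiHat_invertible_and_simple_zeros_general l n hn S hSsymm P hP Ψ hΨ
end

section
/- Let ω ∈ ℂ[z,w] be a polynomial in two complex variables, and write 𝔻 = {u ∈ ℂ : |u| < 1}, 𝔻̄ = {u : |u| ≤ 1}, 𝕋 = {u : |u| = 1}. (a) Suppose there exist z₀ ∈ 𝔻̄ and a dense subset T̂₂ of 𝕋 such that ω(z₀,w) ≠ 0 for all w ∈ 𝔻̄, and ω(z,w) ≠ 0 for all (z,w) ∈ 𝔻 × T̂₂. Then ω(z,w) ≠ 0 for all (z,w) ∈ 𝔻 × 𝔻. (b) Suppose there exist countable subsets T₁ and T₂ of 𝕋 such that ω(z,w) ≠ 0 for all (z,w) ∈ (𝕋∖T₁) × (𝔻̄∖T₂), and ω(z,w) ≠ 0 for all (z,w) ∈ 𝔻 × (𝕋∖T₂). Then ω(z,w) ≠ 0 for all (z,w) ∈ 𝔻 × 𝔻. -/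
/-!
Both parts rest on Hurwitz's theorem for a jointly continuous family `f u` of entire functions:
if `f b` has a zero `a` but only finitely many zeros, then every `f u` with `u` near `b` has a zero
near `a` (otherwise the maximum modulus principle for `1 / f u` on a small disc around `a`
would contradict `f u a ≈ 0`). Zero-freeness on an open set therefore passes from parameters
in `T` to parameters in `closure T`.

(a) A zero in `𝔻 × 𝕋` would persist to nearby `w ∈ T̂₂`, since `ω(·, w) ≠ 0` at `z₀`. The set
`U` of `z` for which `ω(z, ·)` has no zero on `𝔻̄` is open by compactness of `𝔻̄`, meets `𝔻`
near `z₀`, and is relatively closed in `𝔻`: a zero in `𝔻` of a limit slice persists to nearby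
slices. By connectedness `𝔻 ⊆ U`.

(b) A factor `w - w₀` with `w₀ ∈ T₂` that vanishes identically in `z` can be divided out.
Once there are none, the zeros of the slices `ω(·, w₀)`, `w₀ ∈ T₂`, form a countable set, so
some `z₀ ∈ 𝕋 ∖ T₁` avoids all of them, and (a) applies with `T̂₂ = 𝕋 ∖ T₂`.
-/

open Metric Set

/-- Evaluation of a complex bivariate polynomial (variables `0 ↦ z`, `1 ↦ w`). -/
noncomputable def ev2C (p : MvPolynomial (Fin 2) ℂ) (a b : ℂ) : ℂ :=
  MvPolynomial.eval ![a, b] p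

open Filter Topology Polynomial
open scoped Polynomial.Bivariate

section Hurwitz

variable {X : Type*} [TopologicalSpace X] {f : X → ℂ → ℂ}

theorem eventually_exists_zero_mem_closedBall (hf : Continuous (Function.uncurry f))
    (hd : ∀ u, Differentiable ℂ (f u)) {b : X} {a : ℂ} {r : ℝ} (hr : 0 < r) (ha : f b a = 0)
    (hsph : ∀ x ∈ sphere a r, f b x ≠ 0) :
    ∀ᶠ u in 𝓝 b, ∃ x ∈ closedBall a r, f u x = 0 := by
  obtain ⟨m, hm, hmin⟩ : ∃ m, 0 < m ∧ ∀ x ∈ sphere a r, m ≤ ‖f b x‖ :=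
    (isCompact_sphere a r).exists_forall_le' (hf.comp (Continuous.prodMk_right b)).norm.continuousOn
      fun x hx => norm_pos_iff.2 (hsph x hx)
  have hsphere : ∀ᶠ u in 𝓝 b, ∀ x ∈ sphere a r, m / 2 < ‖f u x‖ :=
    (isCompact_sphere a r).eventually_forall_of_forall_eventually fun x hx =>
      hf.norm.continuousAt.eventually (lt_mem_nhds (show m / 2 < ‖f b x‖ by linarith [hmin x hx]))
  have hcenter : ∀ᶠ u in 𝓝 b, ‖f u a‖ < m / 2 :=
    (hf.comp (Continuous.prodMk_left a)).norm.continuousAt.eventually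
      (gt_mem_nhds (by simpa [ha] using half_pos hm))
  filter_upwards [hsphere, hcenter] with u hu hua
  by_contra! hne
  have hdiff : DiffContOnCl ℂ (fun x => (f u x)⁻¹) (ball a r) := by
    refine DifferentiableOn.diffContOnCl fun x hx => ((hd u x).inv (hne x ?_)).differentiableWithinAt
    rwa [closure_ball a hr.ne'] at hx
  have hbound : ‖(f u a)⁻¹‖ ≤ (m / 2)⁻¹ := by
    refine Complex.norm_le_of_forall_mem_frontier_norm_le isBounded_ball hdiff (fun x hx => ?_)
      (subset_closure (mem_ball_self hr))
    rw [frontier_ball a hr.ne'] at hx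
    rw [norm_inv]
    exact inv_anti₀ (half_pos hm) (hu x hx).le
  rw [norm_inv, inv_le_inv₀ (norm_pos_iff.2 (hne a (mem_closedBall_self hr.le))) (half_pos hm)]
    at hbound
  linarith

theorem eventually_exists_zero_mem_ball (hf : Continuous (Function.uncurry f))
    (hd : ∀ u, Differentiable ℂ (f u)) {b : X} {a : ℂ} (ha : f b a = 0)
    (hfin : {x | f b x = 0}.Finite) {ε : ℝ} (hε : 0 < ε) :
    ∀ᶠ u in 𝓝 b, ∃ x ∈ ball a ε, f u x = 0 := by
  obtain ⟨r, ⟨hr, hrε⟩, hr_radius⟩ :=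
    ((Ioo_infinite hε).sdiff (hfin.image fun x => dist x a)).nonempty
  have hsph : ∀ x ∈ sphere a r, f b x ≠ 0 := fun x hx hx0 => hr_radius ⟨x, hx0, hx⟩
  filter_upwards [eventually_exists_zero_mem_closedBall hf hd hr ha hsph] with u ⟨x, hx, hx0⟩
  exact ⟨x, closedBall_subset_ball hrε hx, hx0⟩

theorem forall_ne_zero_of_mem_closure (hf : Continuous (Function.uncurry f))
    (hd : ∀ u, Differentiable ℂ (f u)) {Ω : Set ℂ} (hΩ : IsOpen Ω) {T : Set X}
    (hT : ∀ u ∈ T, ∀ x ∈ Ω, f u x ≠ 0) {b : X} (hb : b ∈ closure T)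
    (hfin : {x | f b x = 0}.Finite) : ∀ x ∈ Ω, f b x ≠ 0 := by
  intro a ha hba
  obtain ⟨ε, hε, hεΩ⟩ := Metric.isOpen_iff.1 hΩ a ha
  obtain ⟨u, ⟨x, hx, hux⟩, huT⟩ :=
    ((eventually_exists_zero_mem_ball hf hd hba hfin hε).and_frequently
      (mem_closure_iff_frequently.1 hb)).exists
  exact hT u huT x (hεΩ hx) hux

end Hurwitz

theorem sphere_subset_closure_sphere_diff {S : Set ℂ} (hS : S.Countable) (c : ℂ) {R : ℝ}
    (hR : 0 < R) : sphere c R ⊆ closure (sphere c R \ S) := by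
  rw [← abs_of_pos hR, ← range_circleMap]
  refine ((continuous_circleMap c R).range_subset_closure_image_dense
    ((hS.preimage_circleMap c hR.ne').dense_compl ℝ)).trans (closure_mono ?_)
  rintro _ ⟨t, ht, rfl⟩
  exact ⟨mem_range_self t, ht⟩

theorem nonempty_sphere_diff {S : Set ℂ} (hS : S.Countable) (c : ℂ) {R : ℝ} (hR : 0 < R) :
    (sphere c R \ S).Nonempty :=
  closure_nonempty_iff.1
    ((NormedSpace.sphere_nonempty.2 hR.le).mono (sphere_subset_closure_sphere_diff hS c hR))

theorem ev2C_eq_evalEval (ω : MvPolynomial (Fin 2) ℂ) (z w : ℂ) :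
    ev2C ω z w = ((Bivariate.equivMvPolynomial ℂ).symm ω).evalEval z w := by
  have : MvPolynomial.eval ![z, w] =
      (evalEvalRingHom z w).comp ((Bivariate.equivMvPolynomial ℂ).symm : _ →+* _) :=
    MvPolynomial.ringHom_ext (by simp) (fun i => by fin_cases i <;> simp)
  exact RingHom.congr_fun this ω

namespace Polynomial

theorem continuous_evalEval {R : Type*} [CommSemiring R] [TopologicalSpace R]
    [IsTopologicalSemiring R] (B : R[X][Y]) :
    Continuous fun p : R × R => B.evalEval p.1 p.2 := by
  induction B using Polynomial.induction_on' with
  | add p q hp hq => simp only [evalEval_add]; exact hp.add hq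
  | monomial n c =>
    simp only [evalEval, eval_monomial, eval_mul, eval_pow, eval_C]
    fun_prop

variable {B : ℂ[X][Y]}

theorem evalEval_ne_zero_of_mem_closure_right {Ω : Set ℂ} (hΩ : IsOpen Ω) {T : Set ℂ}
    (hT : ∀ z ∈ Ω, ∀ w ∈ T, B.evalEval z w ≠ 0) {w : ℂ} (hw : w ∈ closure T)
    (hBw : B.eval (C w) ≠ 0) : ∀ z ∈ Ω, B.evalEval z w ≠ 0 :=
  forall_ne_zero_of_mem_closure (f := fun w z => B.evalEval z w)
    ((continuous_evalEval B).comp continuous_swap) (fun _ => Polynomial.differentiable _) hΩ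
    (fun w hw z hz => hT z hz w hw) hw (finite_setOfPred_isRoot hBw)

theorem evalEval_ne_zero_of_mem_closure_left {Ω : Set ℂ} (hΩ : IsOpen Ω) {S : Set ℂ}
    (hS : ∀ z ∈ S, ∀ w ∈ Ω, B.evalEval z w ≠ 0) {z : ℂ} (hz : z ∈ closure S)
    (hBz : B.map (evalRingHom z) ≠ 0) : ∀ w ∈ Ω, B.evalEval z w ≠ 0 := by
  simp_rw [← map_evalRingHom_eval] at hS ⊢
  refine forall_ne_zero_of_mem_closure (f := fun z w => (B.map (evalRingHom z)).eval w) ?_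
    (fun _ => Polynomial.differentiable _) hΩ hS hz (finite_setOfPred_isRoot hBz)
  exact (continuous_evalEval B).congr fun p => (map_evalRingHom_eval p.1 p.2 B).symm

theorem evalEval_ne_zero_of_dense {z₀ : ℂ} (hz₀ : z₀ ∈ closedBall (0 : ℂ) 1)
    (h₀ : ∀ w ∈ closedBall (0 : ℂ) 1, B.evalEval z₀ w ≠ 0) {T : Set ℂ}
    (hT : sphere (0 : ℂ) 1 ⊆ closure T) (hB : ∀ z ∈ ball (0 : ℂ) 1, ∀ w ∈ T, B.evalEval z w ≠ 0) :
    ∀ z ∈ ball (0 : ℂ) 1, ∀ w ∈ closedBall (0 : ℂ) 1, B.evalEval z w ≠ 0 := by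
  have hsphere : ∀ z ∈ ball (0 : ℂ) 1, ∀ w ∈ sphere (0 : ℂ) 1, B.evalEval z w ≠ 0 :=
    fun z hz w hw => evalEval_ne_zero_of_mem_closure_right isOpen_ball hB (hT hw)
      (fun h => h₀ w (sphere_subset_closedBall hw) (by simp [evalEval, h])) z hz
  obtain ⟨t, ht⟩ : T.Nonempty := closure_nonempty_iff.1 ⟨1, hT (by simp)⟩
  set U := {z | ∀ w ∈ closedBall (0 : ℂ) 1, B.evalEval z w ≠ 0}
  have hU : IsOpen U := isOpen_iff_mem_nhds.2 fun z hz =>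
    (isCompact_closedBall 0 1).eventually_forall_of_forall_eventually fun w hw =>
      (continuous_evalEval B).continuousAt.eventually_ne (hz w hw)
  have hz₀U : z₀ ∈ U := h₀
  have hne : (ball (0 : ℂ) 1 ∩ U).Nonempty := by
    rw [inter_comm]
    exact mem_closure_iff.1 (closure_ball (0 : ℂ) one_ne_zero ▸ hz₀) U hU hz₀U
  have hclosed : closure U ∩ ball (0 : ℂ) 1 ⊆ U := by
    rintro z ⟨hzU, hz⟩ w hw
    rw [← ball_union_sphere] at hw
    rcases hw with hw | hw
    · refine evalEval_ne_zero_of_mem_closure_left (S := U) isOpen_ball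
        (fun z hz w hw => hz w (ball_subset_closedBall hw)) hzU (fun h => hB z hz t ht ?_) w hw
      rw [← map_evalRingHom_eval, h, eval_zero]
    · exact hsphere z hz w hw
  exact (convex_ball (0 : ℂ) 1).isPreconnected.subset_of_closure_inter_subset hU hne hclosed

theorem exists_mem_sphere_forall_evalEval_ne_zero {T₁ T₂ : Set ℂ} (hT₁ : T₁.Countable)
    (hT₂ : T₂.Countable) (hB : ∀ w ∈ T₂, B.eval (C w) ≠ 0) :
    ∃ z₀ ∈ sphere (0 : ℂ) 1 \ T₁, ∀ w ∈ T₂, B.evalEval z₀ w ≠ 0 := by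
  have hZ : (⋃ w ∈ T₂, {z | B.evalEval z w = 0}).Countable :=
    hT₂.biUnion fun w hw => (finite_setOfPred_isRoot (hB w hw)).countable
  obtain ⟨z₀, hz₀, hz₀T⟩ := nonempty_sphere_diff (hT₁.union hZ) 0 one_pos
  simp only [mem_union, mem_iUnion, mem_ofPred_eq, not_or, not_exists] at hz₀T
  exact ⟨z₀, ⟨hz₀, hz₀T.1⟩, fun w hw => hz₀T.2 w hw⟩

theorem evalEval_ne_zero_of_countable {T₁ T₂ : Set ℂ} (hT₁ : T₁.Countable)
    (hT₂ : T₂.Countable) (hT₂s : T₂ ⊆ sphere (0 : ℂ) 1)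
    (h₁ : ∀ z ∈ sphere (0 : ℂ) 1 \ T₁, ∀ w ∈ closedBall (0 : ℂ) 1 \ T₂, B.evalEval z w ≠ 0)
    (h₂ : ∀ z ∈ ball (0 : ℂ) 1, ∀ w ∈ sphere (0 : ℂ) 1 \ T₂, B.evalEval z w ≠ 0) :
    ∀ z ∈ ball (0 : ℂ) 1, ∀ w ∈ ball (0 : ℂ) 1, B.evalEval z w ≠ 0 := by
  induction hn : B.natDegree using Nat.strong_induction_on generalizing B with
  | _ n ih =>
  by_cases hroot : ∃ w₀ ∈ T₂, B.eval (C w₀) = 0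
  · obtain ⟨w₀, hw₀, hB⟩ := hroot
    -- a vertical line `w = w₀` of zeros on the circle splits off as a factor `w - w₀`
    obtain ⟨B', rfl⟩ := dvd_iff_isRoot.2 hB
    have hfactor (z w : ℂ) : ((X - C (C w₀)) * B').evalEval z w = (w - w₀) * B'.evalEval z w := by
      simp [evalEval_mul]
    simp only [hfactor, mul_ne_zero_iff] at h₁ h₂ ⊢
    obtain ⟨w₁, hw₁⟩ := nonempty_sphere_diff hT₂ 0 one_pos
    have hB' : B' ≠ 0 := by
      rintro rfl
      simpa [evalEval] using (h₂ 0 (mem_ball_self one_pos) w₁ hw₁).2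
    have hdeg : B'.natDegree < n := by
      rw [← hn, natDegree_mul (X_sub_C_ne_zero _) hB', natDegree_X_sub_C]
      omega
    refine fun z hz w hw => ⟨sub_ne_zero.2 (sphere_disjoint_ball.ne_of_mem (hT₂s hw₀) hw).symm,
      ih _ hdeg (fun z hz w hw => (h₁ z hz w hw).2) (fun z hz w hw => (h₂ z hz w hw).2) rfl
        z hz w hw⟩
  · push Not at hroot
    obtain ⟨z₀, hz₀, hz₀T₂⟩ := exists_mem_sphere_forall_evalEval_ne_zero hT₁ hT₂ hroot
    have h₀ (w : ℂ) (hw : w ∈ closedBall (0 : ℂ) 1) : B.evalEval z₀ w ≠ 0 := by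
      by_cases hwT : w ∈ T₂
      · exact hz₀T₂ w hwT
      · exact h₁ z₀ hz₀ w ⟨hw, hwT⟩
    exact fun z hz w hw => evalEval_ne_zero_of_dense (sphere_subset_closedBall hz₀.1) h₀
      (sphere_subset_closure_sphere_diff hT₂ 0 one_pos) h₂ z hz w (ball_subset_closedBall hw)

end Polynomial

/-- Lemma 4.13: stability criteria for bivariate polynomials on the open bidisk. -/
theorem stability_criterion (ω : MvPolynomial (Fin 2) ℂ) :
    -- (a)
    (∀ (z₀ : ℂ) (T : Set ℂ),
      ‖z₀‖ ≤ 1 →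
      T ⊆ Metric.sphere (0 : ℂ) 1 →
      Metric.sphere (0 : ℂ) 1 ⊆ closure T →
      (∀ w : ℂ, ‖w‖ ≤ 1 → ev2C ω z₀ w ≠ 0) →
      (∀ z w : ℂ, ‖z‖ < 1 → w ∈ T → ev2C ω z w ≠ 0) →
      ∀ z w : ℂ, ‖z‖ < 1 → ‖w‖ < 1 → ev2C ω z w ≠ 0) ∧
    -- (b)
    (∀ T₁ T₂ : Set ℂ,
      T₁ ⊆ Metric.sphere (0 : ℂ) 1 → T₂ ⊆ Metric.sphere (0 : ℂ) 1 →
      T₁.Countable → T₂.Countable →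
      (∀ z w : ℂ, ‖z‖ = 1 → z ∉ T₁ → ‖w‖ ≤ 1 → w ∉ T₂ →
        ev2C ω z w ≠ 0) →
      (∀ z w : ℂ, ‖z‖ < 1 → ‖w‖ = 1 → w ∉ T₂ →
        ev2C ω z w ≠ 0) →
      ∀ z w : ℂ, ‖z‖ < 1 → ‖w‖ < 1 → ev2C ω z w ≠ 0) := by
  simp only [ev2C_eq_evalEval]
  set B := (Bivariate.equivMvPolynomial ℂ).symm ω
  refine ⟨fun z₀ T hz₀ _ hT h₀ hB z w hz hw => ?_,
    fun T₁ T₂ _ hT₂s hT₁ hT₂ h₁ h₂ z w hz hw => ?_⟩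
  · exact evalEval_ne_zero_of_dense (B := B) (mem_closedBall_zero_iff.2 hz₀)
      (fun w hw => h₀ w (mem_closedBall_zero_iff.1 hw)) hT
      (fun z hz w hw => hB z w (mem_ball_zero_iff.1 hz) hw) z (mem_ball_zero_iff.2 hz)
      w (mem_closedBall_zero_iff.2 hw.le)
  · exact evalEval_ne_zero_of_countable (B := B) hT₁ hT₂ hT₂s
      (fun z hz w hw => h₁ z w (mem_sphere_zero_iff_norm.1 hz.1) hz.2
        (mem_closedBall_zero_iff.1 hw.1) hw.2)
      (fun z hz w hw => h₂ z w (mem_ball_zero_iff.1 hz) (mem_sphere_zero_iff_norm.1 hw.1) hw.2)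
      z (mem_ball_zero_iff.2 hz) w (mem_ball_zero_iff.2 hw)
end

section
/- Let ξ ∈ ℝ[z,w] be a bivariate polynomial with real coefficients that is irreducible in the polynomial ring ℝ[z,w] and has positive degree in z and positive degree in w. Suppose there exist an integer k ≥ 1 and c ∈ ℝ such that ξ(z,w) = c·z^k·ξ(1/z,w) for all z ∈ ℂ∖{0} and all w ∈ ℂ. Then c = 1, k is even, and there exists a point (z₀,w₀) ∈ ℂ² with |z₀| < 1, |w₀| < 1, and ξ(z₀,w₀) = 0. -/
/-!
Setting `z = 1` (resp. `z = -1`) in the functional equation shows that `c ≠ 1` (resp. `k` odd)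
would make `ξ` vanish on the line `z = 1` (resp. `z = -1`); then `z ∓ 1` divides `ξ`, which is
impossible for an irreducible `ξ` depending on `w`.

Suppose now that `ξ` has no zero in the open bidisk, and write `ξ = ∑ a_j(w) z^j`. The functional
equation forces `deg_z ξ = k` and `a_j = a_(k-j)`, so for `|w| < 1` the slice `ξ(·, w)` is
self-reciprocal and has no zero in the open disk. All its zeros then lie on the unit circle, where
`z̄ = z⁻¹`, so it is proportional to `ξ(·, w̄)`: `a_k(w̄) a_j(w) = a_k(w) a_j(w̄)`. An identity of
this shape on an open set holds for independent arguments, `a_k(v) a_j(u) = a_k(u) a_j(v)`, hence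
`a_k(v₀) ξ(z, w) = ξ(z, v₀) a_k(w)`, a product of a polynomial in `z` and one in `w`, contradicting
irreducibility.
-/

/-- Evaluation of a real bivariate polynomial (variables `0 ↦ z`, `1 ↦ w`) at complex points. -/
noncomputable def ev2 (p : MvPolynomial (Fin 2) ℝ) (a b : ℂ) : ℂ :=
  MvPolynomial.aeval ![a, b] p

open scoped Polynomial ComplexConjugate

namespace Polynomial

section Field

variable {K : Type*} [Field K]

theorem eval_reflect {N : ℕ} {f : K[X]} (hf : f.natDegree ≤ N) {z : K} (hz : z ≠ 0) :
    (reflect N f).eval z = z ^ N * f.eval z⁻¹ := by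
  let := invertibleOfNonzero (inv_ne_zero hz)
  have h := eval₂_reflect_mul_pow (RingHom.id K) z⁻¹ N f hf
  rw [invOf_eq_inv, inv_inv, eval₂_id, eval₂_id] at h
  rw [← h, mul_comm, mul_assoc, ← mul_pow, inv_mul_cancel₀ hz, one_pow, mul_one]

theorem roots_reverse_prod_X_sub_C {m : Multiset K} (hm : (0 : K) ∉ m) :
    (m.map (X - C ·)).prod.reverse.roots = m.map (·⁻¹) := by
  induction m using Multiset.induction_on with
  | empty => simp [reverse]
  | cons r m ih =>
    have hr : r ≠ 0 := fun h => hm (h ▸ Multiset.mem_cons_self _ _)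
    have hrev : (X - C r).reverse = C (-r) * X + C 1 := by
      rw [sub_eq_add_neg, ← C_neg, reverse_add_C]; simp [reverse]; ring
    rw [Multiset.map_cons, Multiset.prod_cons, reverse_mul_of_domain, roots_mul, hrev,
      roots_C_mul_X_add_C _ (neg_ne_zero.mpr hr), ih (fun h => hm (Multiset.mem_cons_of_mem h))]
    · simp
    · refine mul_ne_zero ?_ ?_ <;> rw [Ne, reverse_eq_zero]
      · exact X_sub_C_ne_zero r
      · exact (monic_multiset_prod_of_monic _ _ fun a _ => monic_X_sub_C a).ne_zero

theorem roots_reverse [IsAlgClosed K] {p : K[X]} (h0 : p.coeff 0 ≠ 0) :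
    p.reverse.roots = p.roots.map (·⁻¹) := by
  have hp : p ≠ 0 := fun h => h0 (by simp [h])
  have h0' : (0 : K) ∉ p.roots := by simpa [coeff_zero_eq_eval_zero, hp] using h0
  conv_lhs => rw [(IsAlgClosed.splits p).eq_prod_roots]
  rw [reverse_mul_of_domain, reverse_C, roots_C_mul _ (leadingCoeff_ne_zero.mpr hp),
    roots_reverse_prod_X_sub_C h0']

theorem C_leadingCoeff_mul_eq_of_roots_eq [IsAlgClosed K] {p q : K[X]}
    (h : p.roots = q.roots) : C q.leadingCoeff * p = C p.leadingCoeff * q := by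
  conv_lhs => rw [(IsAlgClosed.splits p).eq_prod_roots]
  conv_rhs => rw [(IsAlgClosed.splits q).eq_prod_roots]
  rw [h]; ring

end Field

theorem C_conj_leadingCoeff_mul_eq {p : ℂ[X]} (hrev : p.reverse = p)
    (hroots : ∀ z ∈ p.roots, 1 ≤ ‖z‖) :
    C (conj p.leadingCoeff) * p = C p.leadingCoeff * p.map (starRingEnd ℂ) := by
  rcases eq_or_ne p 0 with rfl | hp
  · simp
  have h0 : p.coeff 0 ≠ 0 := by
    rw [← hrev, coeff_zero_reverse]; exact leadingCoeff_ne_zero.mpr hp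
  have hinv : p.roots.map (·⁻¹) = p.roots := by rw [← roots_reverse h0, hrev]
  -- a root and its inverse both lie outside the open disk, so the root is on the unit circle
  have hconj : ∀ z ∈ p.roots, conj z = z⁻¹ := by
    intro z hz
    have hz0 : z ≠ 0 := norm_pos_iff.mp (one_pos.trans_le (hroots z hz))
    have hle : 1 ≤ ‖z⁻¹‖ := hroots _ (hinv ▸ Multiset.mem_map_of_mem _ hz)
    rw [norm_inv, one_le_inv₀ (norm_pos_iff.mpr hz0)] at hle
    have hnorm : ‖z‖ = 1 := le_antisymm hle (hroots z hz)
    rw [Complex.inv_def, ← Complex.sq_norm, hnorm]; simp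
  have hroots_eq : p.roots = (p.map (starRingEnd ℂ)).roots := by
    rw [(IsAlgClosed.splits p).roots_map_of_injective (starRingEnd ℂ).injective,
      Multiset.map_congr rfl hconj, hinv]
  have := C_leadingCoeff_mul_eq_of_roots_eq hroots_eq
  rwa [leadingCoeff_map_of_injective (starRingEnd ℂ).injective] at this

theorem aeval_complex_ofReal (p : ℝ[X]) (x : ℝ) : aeval (x : ℂ) p = ((p.eval x : ℝ) : ℂ) :=
  aeval_ofReal p x

theorem eq_zero_of_forall_eval_ofReal {p : ℂ[X]} {s : Set ℝ} (hs : s.Infinite)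
    (h : ∀ x ∈ s, p.eval (x : ℂ) = 0) : p = 0 :=
  eq_zero_of_infinite_isRoot p <| (hs.image Complex.ofReal_injective.injOn).mono <| by
    rintro _ ⟨x, hx, rfl⟩; exact h x hx

/- With `F(s, t) = f(s + it) g(s - it) - f(s - it) g(s + it)`, the hypothesis says that `F`
vanishes on a real square around `0`. Being a polynomial in each variable separately, `F` then
vanishes everywhere, and `(u, v) = (s + it, s - it)` is solvable for any `u, v`. -/
theorem eval_mul_eval_comm_of_conj {f g : ℂ[X]}
    (h : ∀ w : ℂ, ‖w‖ < 1 → f.eval w * g.eval (conj w) = f.eval (conj w) * g.eval w)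
    (u v : ℂ) : f.eval u * g.eval v = f.eval v * g.eval u := by
  let Φ : ℂ[X] → ℂ[X] → ℂ[X] := fun P Q => f.comp P * g.comp Q - f.comp Q * g.comp P
  have hΦ : ∀ P Q x, (Φ P Q).eval x = f.eval (P.eval x) * g.eval (Q.eval x)
      - f.eval (Q.eval x) * g.eval (P.eval x) := by
    simp [Φ, eval_comp]
  let F : ℂ → ℂ → ℂ := fun s t => f.eval (s + Complex.I * t) * g.eval (s - Complex.I * t)
    - f.eval (s - Complex.I * t) * g.eval (s + Complex.I * t)
  set J := Set.Ioo (-(1 / 2) : ℝ) (1 / 2)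
  have hJ : J.Infinite := Set.Ioo_infinite (by norm_num)
  have hsquare : ∀ s ∈ J, ∀ t ∈ J, F s t = 0 := by
    intro s hs t ht
    have hconj : conj ((s : ℂ) + Complex.I * t) = s - Complex.I * t := by simp [sub_eq_add_neg]
    have hnorm : ‖(s : ℂ) + Complex.I * t‖ < 1 := by
      calc ‖(s : ℂ) + Complex.I * t‖ ≤ |s| + |t| := by
            simpa using norm_add_le (s : ℂ) (Complex.I * t)
        _ < 1 := by linarith [abs_lt.mpr hs, abs_lt.mpr ht]
    simp only [F, ← hconj, h _ hnorm, sub_self]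
  have hstrip : ∀ s ∈ J, ∀ t : ℂ, F s t = 0 := by
    intro s hs t
    have := eq_zero_of_forall_eval_ofReal hJ
      (p := Φ (C (s : ℂ) + C Complex.I * X) (C (s : ℂ) - C Complex.I * X))
      fun t ht => by simpa [hΦ] using hsquare s hs t ht
    simpa [hΦ] using congrArg (eval t) this
  have hall : ∀ s t : ℂ, F s t = 0 := by
    intro s t
    have := eq_zero_of_forall_eval_ofReal hJ
      (p := Φ (X + C (Complex.I * t)) (X - C (Complex.I * t)))
      fun s hs => by simpa [hΦ] using hstrip s hs t
    simpa [hΦ] using congrArg (eval s) this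
  have huv := hall ((u + v) / 2) ((u - v) / (2 * Complex.I))
  have hu : (u + v) / 2 + Complex.I * ((u - v) / (2 * Complex.I)) = u := by field_simp; ring
  have hv : (u + v) / 2 - Complex.I * ((u - v) / (2 * Complex.I)) = v := by field_simp; ring
  simp only [F, hu, hv] at huv
  exact sub_eq_zero.mp huv

theorem ext_of_forall_map_aeval {A B : ℝ[X][X]}
    (h : ∀ w : ℂ, A.map (aeval w).toRingHom = B.map (aeval w).toRingHom) : A = B := by
  ext1 j
  refine Polynomial.funext fun x => ?_
  have := congrArg (coeff · j) (h x)
  simp only [coeff_map] at this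
  rwa [AlgHom.toRingHom_eq_coe, RingHom.coe_coe, aeval_complex_ofReal, aeval_complex_ofReal,
    Complex.ofReal_inj] at this

end Polynomial

namespace MvPolynomial

section Domain

variable {σ R : Type*} [CommRing R] [IsDomain R]

theorem degreeOf_le_of_dvd {p q : MvPolynomial σ R} (h : p ∣ q) (hq : q ≠ 0) (i : σ) :
    p.degreeOf i ≤ q.degreeOf i := by
  obtain ⟨r, rfl⟩ := h
  rw [degreeOf_mul_eq (left_ne_zero_of_mul hq) (right_ne_zero_of_mul hq)]
  exact Nat.le_add_right _ _

theorem degreeOf_aeval_X_of_ne {i j : σ} (hij : i ≠ j) (f : R[X]) :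
    (Polynomial.aeval (X j : MvPolynomial σ R) f).degreeOf i = 0 := by
  classical
  refine Nat.eq_zero_of_le_zero ?_
  induction f using Polynomial.induction_on with
  | C a => simp
  | add p q hp hq => simpa using (degreeOf_add_le i _ _).trans (max_le hp hq)
  | monomial n a ih =>
    rw [pow_succ, ← mul_assoc, map_mul, Polynomial.aeval_X]
    refine (degreeOf_mul_le i _ _).trans ?_
    simpa [degreeOf_X, hij] using ih

theorem degreeOf_eq_zero_of_dvd_aeval_X {p : MvPolynomial σ R} {i j : σ} (hij : i ≠ j)
    {f : R[X]} (hf : f ≠ 0) (h : p ∣ Polynomial.aeval (X j) f) : p.degreeOf i = 0 := by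
  have hne : Polynomial.aeval (X j : MvPolynomial σ R) f ≠ 0 := fun h0 =>
    hf (transcendental_iff_injective.mp (transcendental_X R j) (h0.trans (map_zero _).symm))
  exact Nat.eq_zero_of_le_zero
    ((degreeOf_le_of_dvd h hne i).trans (degreeOf_aeval_X_of_ne hij f).le)

theorem X_zero_sub_C_dvd [Infinite R] {n : ℕ} {p : MvPolynomial (Fin (n + 1)) R} {r : R}
    (h : ∀ s : Fin n → R, eval (Fin.cons r s) p = 0) : X 0 - C r ∣ p := by
  have hroot : (finSuccEquiv R n p).IsRoot (C r) := by
    refine MvPolynomial.funext fun s => ?_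
    rw [map_zero, Polynomial.eval, Polynomial.hom_eval₂, RingHom.comp_id, eval_C,
      ← Polynomial.eval_map, ← eval_eq_eval_mv_eval', h]
  have hC : finSuccEquiv R n (C r) = Polynomial.C (C r) := (finSuccEquiv R n).commutes r
  rw [← map_dvd_iff (finSuccEquiv R n), map_sub, finSuccEquiv_X_zero, hC]
  exact Polynomial.dvd_iff_isRoot.mpr hroot

end Domain

theorem not_dvd_aeval_X_zero_mul_aeval_X_one {R : Type*} [Field R]
    {p : MvPolynomial (Fin 2) R} (hirr : Irreducible p) (hd0 : 0 < p.degreeOf 0)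
    (hd1 : 0 < p.degreeOf 1) {f g : R[X]} (hf : f ≠ 0) (hg : g ≠ 0) :
    ¬ p ∣ Polynomial.aeval (X 0) f * Polynomial.aeval (X 1) g := fun h =>
  (hirr.prime.dvd_or_dvd h).elim
    (fun h => hd1.ne' (degreeOf_eq_zero_of_dvd_aeval_X (by decide) hf h))
    (fun h => hd0.ne' (degreeOf_eq_zero_of_dvd_aeval_X (by decide) hg h))

section Curry

variable {R S : Type*} [CommSemiring R] [CommSemiring S] [Algebra R S]

/-- `p(z, w)` as a polynomial in the outer variable `z = X 0` whose coefficients are polynomials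
in `w = X 1`. -/
noncomputable def curry : MvPolynomial (Fin 2) R →ₐ[R] R[X][X] :=
  aeval ![Polynomial.X, Polynomial.C Polynomial.X]

noncomputable def slice (p : MvPolynomial (Fin 2) R) (w : S) : S[X] :=
  (curry p).map (Polynomial.aeval w).toRingHom

theorem coeff_slice (p : MvPolynomial (Fin 2) R) (w : S) (j : ℕ) :
    (slice p w).coeff j = Polynomial.aeval w ((curry p).coeff j) :=
  Polynomial.coeff_map _ _

theorem eval_slice (p : MvPolynomial (Fin 2) R) (z w : S) :
    (slice p w).eval z = aeval ![z, w] p := by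
  induction p using MvPolynomial.induction_on with
  | C a => simp [slice, curry, Polynomial.algebraMap_apply]
  | add p q hp hq => simp_all [slice]
  | mul_X p i ih => fin_cases i <;> simp_all [slice, curry]

end Curry

theorem slice_conj (p : MvPolynomial (Fin 2) ℝ) (w : ℂ) :
    slice p (conj w) = (slice p w).map (starRingEnd ℂ) := by
  ext j
  rw [Polynomial.coeff_map, coeff_slice, coeff_slice, Polynomial.aeval_conj]

end MvPolynomial

open MvPolynomial

theorem ev2_eq_eval_slice (ξ : MvPolynomial (Fin 2) ℝ) (z w : ℂ) :
    ev2 ξ z w = (slice ξ w).eval z :=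
  (eval_slice ξ z w).symm

theorem ev2_ofReal (ξ : MvPolynomial (Fin 2) ℝ) (a b : ℝ) :
    ev2 ξ a b = (MvPolynomial.eval ![a, b] ξ : ℂ) := by
  have h := comp_aeval_apply (Algebra.ofId ℝ ℂ) (f := ![a, b]) ξ
  have hx : (fun i => Algebra.ofId ℝ ℂ (![a, b] i)) = ![(a : ℂ), b] := by
    ext i; fin_cases i <;> rfl
  rw [hx] at h
  exact h.symm

section SelfReciprocal

variable {ξ : MvPolynomial (Fin 2) ℝ}

theorem exists_ev2_ne_zero (hirr : Irreducible ξ) (hdw : 0 < ξ.degreeOf 1) (r : ℝ) :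
    ∃ w : ℂ, ev2 ξ r w ≠ 0 := by
  by_contra! h
  obtain ⟨e, he⟩ : X 0 - C r ∣ ξ := X_zero_sub_C_dvd fun s => by
    have hs : (Fin.cons r s : Fin 2 → ℝ) = ![r, s 0] := by ext i; fin_cases i <;> rfl
    simpa [hs, ev2_ofReal] using h (s 0)
  have hlin : ¬ IsUnit (X 0 - C r : MvPolynomial (Fin 2) ℝ) := fun hu => by
    simpa using hu.map (MvPolynomial.eval ![r, 0])
  obtain ⟨u, rfl⟩ := (hirr.isUnit_or_isUnit he).resolve_left hlin
  have hdvd : ξ ∣ Polynomial.aeval (X 0) (Polynomial.X - Polynomial.C r) :=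
    ⟨↑u⁻¹, by simp [he, mul_assoc]⟩
  have := degreeOf_eq_zero_of_dvd_aeval_X (i := 1) (j := 0) (by decide)
    (Polynomial.X_sub_C_ne_zero r) hdvd
  omega

theorem eq_one_of_ev2_eq (hirr : Irreducible ξ) (hdw : 0 < ξ.degreeOf 1) {k : ℕ} {c : ℝ}
    (heq : ∀ z w : ℂ, z ≠ 0 → ev2 ξ z w = (c : ℂ) * z ^ k * ev2 ξ z⁻¹ w) : c = 1 := by
  obtain ⟨w, hw⟩ := exists_ev2_ne_zero hirr hdw 1
  have h := heq 1 w one_ne_zero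
  rw [inv_one, one_pow, mul_one] at h
  rw [Complex.ofReal_one] at hw
  exact_mod_cast (mul_eq_right₀ hw).mp h.symm

theorem even_of_ev2_eq (hirr : Irreducible ξ) (hdw : 0 < ξ.degreeOf 1) {k : ℕ}
    (heq : ∀ z w : ℂ, z ≠ 0 → ev2 ξ z w = z ^ k * ev2 ξ z⁻¹ w) : Even k := by
  by_contra hodd
  obtain ⟨w, hw⟩ := exists_ev2_ne_zero hirr hdw (-1)
  have h := heq (-1) w (by norm_num)
  rw [inv_neg, inv_one, (Nat.not_even_iff_odd.mp hodd).neg_one_pow] at h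
  push_cast at hw
  exact hw (by linear_combination h / 2)

theorem curry_ne_zero (hirr : Irreducible ξ) (hdw : 0 < ξ.degreeOf 1) : curry ξ ≠ 0 := by
  obtain ⟨w, hw⟩ := exists_ev2_ne_zero hirr hdw 0
  intro h
  simp [ev2_eq_eval_slice, slice, h] at hw

theorem X_pow_mul_curry_eq {k : ℕ}
    (heq : ∀ z w : ℂ, z ≠ 0 → ev2 ξ z w = z ^ k * ev2 ξ z⁻¹ w) :
    Polynomial.X ^ (curry ξ).natDegree * curry ξ
      = Polynomial.X ^ k * (curry ξ).reflect (curry ξ).natDegree := by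
  set N := (curry ξ).natDegree
  refine Polynomial.ext_of_forall_map_aeval fun w => ?_
  simp only [Polynomial.map_mul, Polynomial.map_pow, Polynomial.map_X, ← Polynomial.reflect_map]
  change Polynomial.X ^ N * slice ξ w = Polynomial.X ^ k * (slice ξ w).reflect N
  refine Polynomial.eq_of_infinite_eval_eq _ _
    ((Set.finite_singleton 0).infinite_compl.mono fun z (hz : z ≠ 0) => ?_)
  have hdeg : (slice ξ w).natDegree ≤ N := Polynomial.natDegree_map_le
  rw [Set.mem_ofPred_eq, Polynomial.eval_mul, Polynomial.eval_mul, Polynomial.eval_X_pow,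
    Polynomial.eval_X_pow, Polynomial.eval_reflect hdeg hz, ← ev2_eq_eval_slice,
    ← ev2_eq_eval_slice, heq z w hz]
  ring

theorem natDegree_curry_eq_and_reflect_eq (hirr : Irreducible ξ) (hdw : 0 < ξ.degreeOf 1)
    {k : ℕ} (heq : ∀ z w : ℂ, z ≠ 0 → ev2 ξ z w = z ^ k * ev2 ξ z⁻¹ w) :
    (curry ξ).natDegree = k ∧ (curry ξ).reflect k = curry ξ := by
  have hrefl := X_pow_mul_curry_eq heq
  set N := (curry ξ).natDegree
  have hkN : k = N := by
    rcases lt_trichotomy k N with hlt | hkN | hgt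
    · have hdeg := congrArg Polynomial.natDegree hrefl
      rw [Polynomial.natDegree_mul (pow_ne_zero _ Polynomial.X_ne_zero) (curry_ne_zero hirr hdw),
        Polynomial.natDegree_X_pow] at hdeg
      have : (Polynomial.X ^ k * (curry ξ).reflect N).natDegree ≤ k + max N N :=
        Polynomial.natDegree_mul_le.trans
          (add_le_add (Polynomial.natDegree_X_pow_le k) Polynomial.natDegree_reflect_le)
      omega
    · exact hkN
    · obtain ⟨w, hw⟩ := exists_ev2_ne_zero hirr hdw 0
      have h0 : (curry ξ).coeff 0 = 0 := by
        simpa [Polynomial.coeff_X_pow_mul', hgt.not_ge] using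
          congrArg (Polynomial.coeff · N) hrefl
      refine absurd ?_ hw
      rw [Complex.ofReal_zero, ev2_eq_eval_slice, ← Polynomial.coeff_zero_eq_eval_zero,
        coeff_slice, h0, map_zero]
  subst hkN
  exact ⟨rfl, (mul_left_cancel₀ (pow_ne_zero _ Polynomial.X_ne_zero) hrefl).symm⟩

theorem C_aeval_conj_mul_slice_eq {k : ℕ} (hdeg : (curry ξ).natDegree = k)
    (hrefl : (curry ξ).reflect k = curry ξ)
    (hno : ∀ z w : ℂ, ‖z‖ < 1 → ‖w‖ < 1 → ev2 ξ z w ≠ 0) {w : ℂ} (hw : ‖w‖ < 1) :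
    Polynomial.C (Polynomial.aeval (conj w) (curry ξ).leadingCoeff) * slice ξ w
      = Polynomial.C (Polynomial.aeval w (curry ξ).leadingCoeff) * slice ξ (conj w) := by
  set a := (curry ξ).leadingCoeff
  by_cases ha : Polynomial.aeval w a = 0
  · simp [ha, Polynomial.aeval_conj]
  have hlead : (slice ξ w).coeff k = Polynomial.aeval w a := by
    rw [coeff_slice, ← hdeg]; rfl
  have hdeg' : (slice ξ w).natDegree = k :=
    le_antisymm (hdeg ▸ Polynomial.natDegree_map_le)
      (Polynomial.le_natDegree_of_ne_zero (hlead ▸ ha))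
  have hrev : (slice ξ w).reverse = slice ξ w := by
    rw [Polynomial.reverse, hdeg', slice, Polynomial.reflect_map, hrefl]
  have hroots : ∀ z ∈ (slice ξ w).roots, 1 ≤ ‖z‖ := fun z hz => not_lt.mp fun hz1 =>
    hno z w hz1 hw (by rw [ev2_eq_eval_slice]; exact (Polynomial.mem_roots'.mp hz).2)
  have := Polynomial.C_conj_leadingCoeff_mul_eq hrev hroots
  rwa [Polynomial.leadingCoeff, hdeg', hlead, ← Polynomial.aeval_conj, ← slice_conj] at this

theorem eval_coeff_curry_mul_comm {k : ℕ} (hdeg : (curry ξ).natDegree = k)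
    (hrefl : (curry ξ).reflect k = curry ξ)
    (hno : ∀ z w : ℂ, ‖z‖ < 1 → ‖w‖ < 1 → ev2 ξ z w ≠ 0) (j : ℕ) (u v : ℝ) :
    ((curry ξ).coeff j).eval u * (curry ξ).leadingCoeff.eval v
      = ((curry ξ).coeff j).eval v * (curry ξ).leadingCoeff.eval u := by
  set a := (curry ξ).leadingCoeff
  have key := Polynomial.eval_mul_eval_comm_of_conj
    (f := ((curry ξ).coeff j).map (algebraMap ℝ ℂ)) (g := a.map (algebraMap ℝ ℂ))
    (fun w hw => by
      have := congrArg (Polynomial.coeff · j) (C_aeval_conj_mul_slice_eq hdeg hrefl hno hw)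
      simp only [Polynomial.coeff_C_mul, coeff_slice] at this
      simp only [Polynomial.eval_map_algebraMap]
      linear_combination this) u v
  simp only [Polynomial.eval_map_algebraMap, Polynomial.aeval_complex_ofReal] at key
  exact_mod_cast key

theorem C_mul_eq_aeval_mul_aeval {g : ℝ[X]}
    (hcomm : ∀ (j : ℕ) (u v : ℝ), ((curry ξ).coeff j).eval u * g.eval v
      = ((curry ξ).coeff j).eval v * g.eval u) (v₀ : ℝ) :
    C (g.eval v₀) * ξ = Polynomial.aeval (X 0) (slice ξ v₀) * Polynomial.aeval (X 1) g := by
  refine MvPolynomial.funext fun x => ?_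
  have hx : x = ![x 0, x 1] := by ext i; fin_cases i <;> rfl
  have hslice : Polynomial.C (g.eval v₀) * slice ξ (x 1)
      = Polynomial.C (g.eval (x 1)) * slice ξ v₀ := by
    ext j
    simp only [Polynomial.coeff_C_mul, coeff_slice, Polynomial.coe_aeval_eq_eval]
    linear_combination hcomm j (x 1) v₀
  have hevalX : ∀ (i : Fin 2) (f : ℝ[X]), eval x (Polynomial.aeval (X i) f) = f.eval (x i) := by
    intro i f
    simpa [Polynomial.coe_aeval_eq_eval, MvPolynomial.coe_aeval_eq_eval] using
      (Polynomial.aeval_algHom_apply (MvPolynomial.aeval x) (X i) f).symm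
  have := congrArg (Polynomial.eval (x 0)) hslice
  rw [Polynomial.eval_mul, Polynomial.eval_mul, Polynomial.eval_C, Polynomial.eval_C, eval_slice,
    eval_slice, ← hx] at this
  rw [map_mul, map_mul, eval_C, hevalX, hevalX, eval_slice, show eval x ξ = aeval x ξ from rfl]
  linear_combination this

end SelfReciprocal

theorem selfreciprocal_irreducible_has_bidisk_zero_general
    (ξ : MvPolynomial (Fin 2) ℝ) (hirr : Irreducible ξ)
    (hdz : 0 < ξ.degreeOf 0) (hdw : 0 < ξ.degreeOf 1)
    (k : ℕ) (c : ℝ)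
    (heq : ∀ z w : ℂ, z ≠ 0 → ev2 ξ z w = (c : ℂ) * z ^ k * ev2 ξ z⁻¹ w) :
    c = 1 ∧ Even k ∧
      ∃ z₀ w₀ : ℂ, ‖z₀‖ < 1 ∧ ‖w₀‖ < 1 ∧ ev2 ξ z₀ w₀ = 0 := by
  obtain rfl : c = 1 := eq_one_of_ev2_eq hirr hdw heq
  replace heq : ∀ z w : ℂ, z ≠ 0 → ev2 ξ z w = z ^ k * ev2 ξ z⁻¹ w := by simpa using heq
  refine ⟨rfl, even_of_ev2_eq hirr hdw heq, ?_⟩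
  by_contra! hno
  obtain ⟨hdeg, hrefl⟩ := natDegree_curry_eq_and_reflect_eq hirr hdw heq
  set a := (curry ξ).leadingCoeff
  have ha : a ≠ 0 := Polynomial.leadingCoeff_ne_zero.mpr (curry_ne_zero hirr hdw)
  obtain ⟨v₀, hv₀ : a.eval v₀ ≠ 0⟩ :=
    (Polynomial.finite_setOfPred_isRoot ha).infinite_compl.nonempty
  have hslice : slice ξ v₀ ≠ 0 := fun h => hv₀ <| by
    simpa [coeff_slice, ← hdeg] using congrArg (Polynomial.coeff · k) h
  refine not_dvd_aeval_X_zero_mul_aeval_X_one hirr hdz hdw hslice ha ⟨C (a.eval v₀), ?_⟩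
  rw [← C_mul_eq_aeval_mul_aeval (eval_coeff_curry_mul_comm hdeg hrefl hno) v₀, mul_comm]

/-- Lemma 4.14: an irreducible real bivariate polynomial depending on both variables and
satisfying `ξ(z,w) = c·z^k·ξ(1/z,w)` has `c = 1`, `k` even, and a zero in the open bidisk. -/
theorem selfreciprocal_irreducible_has_bidisk_zero
    (ξ : MvPolynomial (Fin 2) ℝ) (hirr : Irreducible ξ)
    (hdz : 0 < ξ.degreeOf 0) (hdw : 0 < ξ.degreeOf 1)
    (k : ℕ) (hk : 1 ≤ k) (c : ℝ)
    (heq : ∀ z w : ℂ, z ≠ 0 → ev2 ξ z w = (c : ℂ) * z ^ k * ev2 ξ z⁻¹ w) :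
    c = 1 ∧ Even k ∧
      ∃ z₀ w₀ : ℂ, ‖z₀‖ < 1 ∧ ‖w₀‖ < 1 ∧ ev2 ξ z₀ w₀ = 0 :=
  selfreciprocal_irreducible_has_bidisk_zero_general ξ hirr hdz hdw k c heq
end
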